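/- arXiv:2305.18692 — 10 statements merged into one kernel-verified Lean document; each statement's English description precedes it below -/
import Mathlib

section
/- Let M be a compact metric space and φ:ℝ×M→M a continuous flow without fixed points. If φ is separating, then φ has a quasi-trivial centralizer: for every continuous flow ψ:ℝ×M→M commuting with φ (i.e. ψ_s∘φ_t = φ_t∘ψ_s for all s,t∈ℝ), there exists a continuous function A:M→ℝ with A(φ_t(x)) = A(x) for all x∈M, t∈ℝ, such that ψ_t(x) = φ_{A(x)t}(x) for all x∈M and t∈ℝ. -/
open Filter Topology Set

/-!
For a point `x`, the pairs `(s, τ)` with `ψ s x = ϕ τ x` form a closed subgroup `H` of `ℝ × ℝ`.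
Separation, applied to `y = ψ s x` with `s` small, shows that every `s` occurs in it, and since `x`
is not fixed, `H` meets the vertical axis in a discrete group. A Baire category argument then
gives small lifts of small times; uniqueness of small lifts makes the lifts of the dyadic times
`η / 2 ^ n` linear, so `H` contains a whole line `{(s, a * s)}`, and `A x := a`.
`A` is invariant and unique because no point is fixed. It is bounded, since at a limit of points
where `|A| → ∞` the maps `ψ s` with `s → 0` would realise every `ϕ t`. Together with its closed
graph this makes it continuous.
-/

section ClosedGraph

variable {X Y : Type*} [TopologicalSpace X] [TopologicalSpace Y]

theorem IsClosed.isClosed_setOf_exists_mem_of_isCompact {F : Set (X × Y)} (hF : IsClosed F)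
    {K : Set Y} (hK : IsCompact K) : IsClosed {x | ∃ y ∈ K, (x, y) ∈ F} := by
  have : CompactSpace K := isCompact_iff_compactSpace.mp hK
  have hF' : IsClosed {p : X × K | (p.1, (p.2 : Y)) ∈ F} :=
    hF.preimage (continuous_fst.prodMk (continuous_subtype_val.comp continuous_snd))
  convert isClosedMap_fst_of_compactSpace _ hF' using 1
  ext x
  simp

theorem continuous_of_isClosed_graph_of_mapsTo {f : X → Y} {K : Set Y} (hK : IsCompact K)
    (hfK : ∀ x, f x ∈ K) (hf : IsClosed {p : X × Y | p.2 = f p.1}) : Continuous f := by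
  refine continuous_iff_isClosed.mpr fun C hC => ?_
  convert hf.isClosed_setOf_exists_mem_of_isCompact (hK.inter_right hC) using 1
  ext x
  simpa using fun hx => hfK x

end ClosedGraph

namespace AddSubgroup

theorem eq_top_of_mem_nhds_zero {G : Type*} [AddGroup G] [TopologicalSpace G]
    [IsTopologicalAddGroup G] [ConnectedSpace G] (H : AddSubgroup G)
    (hH : (H : Set G) ∈ 𝓝 0) : H = ⊤ := by
  have hopen := H.isOpen_of_mem_nhds hH
  exact coe_eq_univ.mp (IsClopen.eq_univ ⟨H.isClosed_of_isOpen hopen, hopen⟩ ⟨0, H.zero_mem⟩)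

theorem eq_top_of_isClosed_of_dense {H : AddSubgroup ℝ} (hH : IsClosed (H : Set ℝ))
    (hd : Dense (H : Set ℝ)) : H = ⊤ :=
  coe_eq_univ.mp (by rw [← hH.closure_eq, hd.closure_eq])

theorem exists_pos_forall_abs_le_eq_zero {H : AddSubgroup ℝ} (hH : IsClosed (H : Set ℝ))
    (hne : H ≠ ⊤) : ∃ T > 0, ∀ τ ∈ H, |τ| ≤ T → τ = 0 := by
  by_contra! h
  refine hne (eq_top_of_isClosed_of_dense hH (H.dense_of_not_isolated_zero fun ε hε => ?_))
  obtain ⟨τ, hτH, hτε, hτ0⟩ := h (ε / 2) (half_pos hε)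
  refine ⟨|τ|, ?_, abs_pos.mpr hτ0, by linarith⟩
  rcases abs_choice τ with h | h <;> rw [h]
  exacts [hτH, H.neg_mem hτH]

section Plane

variable {H : AddSubgroup (ℝ × ℝ)}

theorem exists_pos_forall_exists_abs_le (hH : IsClosed (H : Set (ℝ × ℝ)))
    (hfst : ∀ s, ∃ τ, (s, τ) ∈ H) {ε : ℝ} (hε : 0 < ε) :
    ∃ η > 0, ∀ s, |s| ≤ η → ∃ τ, |τ| ≤ ε ∧ (s, τ) ∈ H := by
  let S : ℚ → Set ℝ := fun q => {s | ∃ τ ∈ Metric.closedBall (q : ℝ) (ε / 2), (s, τ) ∈ H}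
  have hS_closed : ∀ q, IsClosed (S q) := fun q =>
    hH.isClosed_setOf_exists_mem_of_isCompact (isCompact_closedBall _ _)
  have hS_cover : ⋃ q, S q = univ := by
    refine eq_univ_of_forall fun s => ?_
    obtain ⟨τ, hτ⟩ := hfst s
    obtain ⟨q, hq⟩ := Rat.denseRange_cast.exists_dist_lt τ (half_pos hε)
    exact mem_iUnion.mpr ⟨q, τ, hq.le, hτ⟩
  obtain ⟨q, c, hc⟩ := nonempty_interior_of_iUnion_of_closed hS_closed hS_cover
  obtain ⟨η, hη, hball⟩ := Metric.mem_nhds_iff.mp (mem_interior_iff_mem_nhds.mp hc)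
  refine ⟨η / 2, half_pos hη, fun s hs => ?_⟩
  obtain ⟨τ₁, hτ₁, h₁⟩ := hball (show c + s ∈ Metric.ball c η by
    rw [Metric.mem_ball, dist_eq_norm, add_sub_cancel_left, Real.norm_eq_abs]; linarith)
  obtain ⟨τ₂, hτ₂, h₂⟩ := hball (Metric.mem_ball_self hη)
  refine ⟨τ₁ - τ₂, ?_, by simpa using H.sub_mem h₁ h₂⟩
  rw [Metric.mem_closedBall, Real.dist_eq] at hτ₁ hτ₂
  rw [abs_sub_comm] at hτ₂
  linarith [abs_sub_le τ₁ q τ₂]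

theorem exists_forall_mul_mem (hH : IsClosed (H : Set (ℝ × ℝ)))
    (hfst : ∀ s, ∃ τ, (s, τ) ∈ H) (hsnd : ∃ τ, (0, τ) ∉ H) :
    ∃ a : ℝ, ∀ s, (s, a * s) ∈ H := by
  obtain ⟨T, hT, hP⟩ := exists_pos_forall_abs_le_eq_zero
    (H := H.comap (AddMonoidHom.inr ℝ ℝ)) (hH.preimage (continuous_const.prodMk continuous_id))
    (fun htop => hsnd.elim fun τ hτ => hτ (by simpa using (eq_top_iff' _).mp htop τ))
  have huniq : ∀ s τ τ', (s, τ) ∈ H → (s, τ') ∈ H → |τ| ≤ T / 2 → |τ'| ≤ T / 2 → τ = τ' := by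
    intro s τ τ' h h' hb hb'
    refine sub_eq_zero.mp (hP _ (by simpa using H.sub_mem h h') ?_)
    linarith [abs_sub τ τ']
  obtain ⟨η, hη, hsmall⟩ := exists_pos_forall_exists_abs_le hH hfst (by positivity : 0 < T / 4)
  choose c hc hcH using fun n : ℕ => hsmall (η / 2 ^ n)
    (by rw [abs_of_pos (by positivity)]; exact div_le_self hη.le (one_le_pow₀ one_le_two))
  have hc_succ : ∀ n, c n = 2 * c (n + 1) := by
    intro n
    refine huniq (η / 2 ^ n) _ _ (hcH n) ?_ (by linarith [hc n]) ?_
    · have e : (η / 2 ^ n, 2 * c (n + 1)) =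
          (η / 2 ^ (n + 1), c (n + 1)) + (η / 2 ^ (n + 1), c (n + 1)) := by
        ext <;> simp only [Prod.fst_add, Prod.snd_add] <;> ring
      rw [e]
      exact H.add_mem (hcH (n + 1)) (hcH (n + 1))
    · rw [abs_mul, abs_two]; linarith [hc (n + 1)]
  have hc_eq : ∀ n, c n = c 0 / 2 ^ n := by
    intro n
    induction n with
    | zero => simp
    | succ n ih => rw [pow_succ, ← div_div, ← ih, hc_succ n]; ring
  refine ⟨c 0 / η, fun s => ?_⟩
  let L := H.comap ((AddMonoidHom.id ℝ).prod (AddMonoidHom.mulLeft (c 0 / η)))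
  have hL_closed : IsClosed (L : Set ℝ) :=
    hH.preimage (continuous_id.prodMk (continuous_const_mul _))
  have hL_dense : Dense (L : Set ℝ) := L.dense_of_not_isolated_zero fun ε hε => by
    obtain ⟨n, hn⟩ := exists_pow_lt_of_lt_one (div_pos hε hη) (by norm_num : (1 / 2 : ℝ) < 1)
    refine ⟨η / 2 ^ n, ?_, by positivity, ?_⟩
    · have : c 0 / η * (η / 2 ^ n) = c n := by rw [hc_eq n]; field_simp
      simpa [L, this] using hcH n
    · rw [lt_div_iff₀ hη] at hn
      linarith [show η / 2 ^ n = (1 / 2) ^ n * η by rw [one_div_pow]; ring]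
  simpa [L] using (eq_top_iff' L).mp (eq_top_of_isClosed_of_dense hL_closed hL_dense) s

end Plane

end AddSubgroup

namespace Flow

theorem tendsto_apply {τ α ι : Type*} [TopologicalSpace τ] [TopologicalSpace α] [AddZero τ]
    (ϕ : Flow τ α) {l : Filter ι} {t : ι → τ} {x : ι → α} {t₀ : τ} {x₀ : α}
    (ht : Tendsto t l (𝓝 t₀)) (hx : Tendsto x l (𝓝 x₀)) :
    Tendsto (fun i => ϕ (t i) (x i)) l (𝓝 (ϕ t₀ x₀)) :=
  (ϕ.cont'.tendsto (t₀, x₀)).comp (ht.prodMk_nhds hx)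

theorem eventually_forall_dist_lt {τ α : Type*} [TopologicalSpace τ] [AddZero τ]
    [PseudoMetricSpace α] [CompactSpace α] (ϕ : Flow τ α) {ε : ℝ} (hε : 0 < ε) :
    ∀ᶠ t in 𝓝 0, ∀ x, dist (ϕ t x) x < ε := by
  have hcont : Continuous fun p : τ × α => dist (ϕ p.1 p.2) p.2 :=
    (ϕ.continuous continuous_fst continuous_snd).dist continuous_snd
  simpa using isCompact_univ.eventually_forall_of_forall_eventually fun x _ =>
    hcont.continuousAt.eventually (gt_mem_nhds (by simpa [ϕ.map_zero_apply] using hε))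

variable {M : Type*} [MetricSpace M]

def IsSeparating (ϕ : Flow ℝ M) : Prop :=
  ∃ δ > 0, ∀ x y, (∀ t, dist (ϕ t x) (ϕ t y) < δ) → y ∈ ϕ.orbit x

theorem eq_of_forall_apply_mul_eq {ϕ : Flow ℝ M} {x : M} (hx : ∃ t, ϕ t x ≠ x) {a b : ℝ}
    (h : ∀ s, ϕ (a * s) x = ϕ (b * s) x) : a = b := by
  by_contra hab
  obtain ⟨t, ht⟩ := hx
  apply ht
  have hs := congrArg (ϕ (-(b * (t / (a - b))))) (h (t / (a - b)))
  rwa [← ϕ.map_add, ← ϕ.map_add, neg_add_cancel, ϕ.map_zero_apply,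
    ← sub_eq_neg_add, ← sub_mul, mul_div_cancel₀ _ (sub_ne_zero.mpr hab)] at hs

variable (ϕ ψ : Flow ℝ M)

def coincidenceTimes (hcomm : ∀ s t x, ψ s (ϕ t x) = ϕ t (ψ s x)) (x : M) :
    AddSubgroup (ℝ × ℝ) where
  carrier := {p | ψ p.1 x = ϕ p.2 x}
  zero_mem' := by simp [map_zero_apply]
  add_mem' := by
    rintro ⟨s, τ⟩ ⟨s', τ'⟩ (h : ψ s x = ϕ τ x) (h' : ψ s' x = ϕ τ' x)
    show ψ (s + s') x = ϕ (τ + τ') x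
    rw [ψ.map_add, h', hcomm, h, ← ϕ.map_add, add_comm τ']
  neg_mem' := by
    rintro ⟨s, τ⟩ (h : ψ s x = ϕ τ x)
    show ψ (-s) x = ϕ (-τ) x
    calc ψ (-s) x = ψ (-s) (ϕ (-τ) (ϕ τ x)) := by
          rw [← ϕ.map_add, neg_add_cancel, ϕ.map_zero_apply]
      _ = ϕ (-τ) (ψ (-s) (ψ s x)) := by rw [hcomm, h]
      _ = ϕ (-τ) x := by rw [← ψ.map_add, neg_add_cancel, ψ.map_zero_apply]

variable {ϕ ψ} in
theorem mem_coincidenceTimes {hcomm : ∀ s t x, ψ s (ϕ t x) = ϕ t (ψ s x)} {x : M}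
    {p : ℝ × ℝ} :
    p ∈ coincidenceTimes ϕ ψ hcomm x ↔ ψ p.1 x = ϕ p.2 x :=
  Iff.rfl

theorem isClosed_coincidenceTimes (hcomm : ∀ s t x, ψ s (ϕ t x) = ϕ t (ψ s x)) (x : M) :
    IsClosed (coincidenceTimes ϕ ψ hcomm x : Set (ℝ × ℝ)) :=
  isClosed_eq (ψ.continuous continuous_fst continuous_const)
    (ϕ.continuous continuous_snd continuous_const)

variable [CompactSpace M]

theorem exists_eq_of_isSeparating (hcomm : ∀ s t x, ψ s (ϕ t x) = ϕ t (ψ s x))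
    (hsep : ϕ.IsSeparating) (x : M) (s : ℝ) :
    ∃ τ, ψ s x = ϕ τ x := by
  obtain ⟨δ, hδ, hsep⟩ := hsep
  have htop : (coincidenceTimes ϕ ψ hcomm x).map (AddMonoidHom.fst ℝ ℝ) = ⊤ := by
    refine AddSubgroup.eq_top_of_mem_nhds_zero _ ?_
    filter_upwards [ψ.eventually_forall_dist_lt hδ] with s hs
    obtain ⟨τ, hτ⟩ := hsep x (ψ s x) fun t => by
      rw [← hcomm, dist_comm]; exact hs _
    exact ⟨(s, τ), hτ.symm, rfl⟩
  obtain ⟨⟨s', τ⟩, h, rfl⟩ := AddSubgroup.mem_map.mp ((AddSubgroup.eq_top_iff' _).mp htop s)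
  exact ⟨τ, h⟩

theorem exists_forall_eq_apply_mul (hcomm : ∀ s t x, ψ s (ϕ t x) = ϕ t (ψ s x))
    (hsep : ϕ.IsSeparating) {x : M} (hx : ∃ t, ϕ t x ≠ x) :
    ∃ a : ℝ, ∀ s, ψ s x = ϕ (a * s) x :=
  AddSubgroup.exists_forall_mul_mem (isClosed_coincidenceTimes ϕ ψ hcomm x)
    (exists_eq_of_isSeparating ϕ ψ hcomm hsep x)
    (hx.imp fun t ht h => ht (by simpa [mem_coincidenceTimes, ψ.map_zero_apply] using h.symm))

theorem exists_forall_abs_le (hfix : ∀ x, ∃ t, ϕ t x ≠ x) {A : M → ℝ}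
    (hA : ∀ x s, ψ s x = ϕ (A x * s) x) : ∃ C, ∀ x, |A x| ≤ C := by
  by_contra! h
  choose x hx using fun n : ℕ => h n
  obtain ⟨x₀, -, k, hk, hxk⟩ := isCompact_univ.tendsto_subseq fun n => mem_univ (x n)
  obtain ⟨t, ht⟩ := hfix x₀
  have hA_top : Tendsto (fun n => |A (x (k n))|) atTop atTop :=
    tendsto_atTop_mono (fun n => (hx (k n)).le)
      (tendsto_natCast_atTop_atTop.comp hk.tendsto_atTop)
  have hs : Tendsto (fun n => t / A (x (k n))) atTop (𝓝 0) := by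
    rw [tendsto_zero_iff_norm_tendsto_zero]
    simpa [abs_div, div_eq_mul_inv] using (tendsto_inv_atTop_zero.comp hA_top).const_mul |t|
  have hψ := ψ.tendsto_apply hs hxk
  have hϕ := ϕ.tendsto_apply (tendsto_const_nhds (x := t)) hxk
  refine ht (tendsto_nhds_unique (hϕ.congr fun n => ?_) hψ ▸ ψ.map_zero_apply x₀)
  have hA0 : A (x (k n)) ≠ 0 := abs_pos.mp ((Nat.cast_nonneg _).trans_lt (hx (k n)))
  rw [hA, Function.comp_apply, mul_div_cancel₀ _ hA0]

theorem exists_continuous_invariant_of_isSeparating (hfix : ∀ x, ∃ t, ϕ t x ≠ x)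
    (hsep : ϕ.IsSeparating) (hcomm : ∀ s t x, ψ s (ϕ t x) = ϕ t (ψ s x)) :
    ∃ A : M → ℝ, Continuous A ∧ (∀ x t, A (ϕ t x) = A x) ∧ ∀ x t, ψ t x = ϕ (A x * t) x := by
  choose A hA using fun x => exists_forall_eq_apply_mul ϕ ψ hcomm hsep (hfix x)
  have hA_unique : ∀ x b, (∀ s, ψ s x = ϕ (b * s) x) → b = A x := fun x b hb =>
    eq_of_forall_apply_mul_eq (hfix x) fun s => by rw [← hb, hA]
  refine ⟨A, ?_, fun x t => (hA_unique _ _ fun s => ?_).symm, hA⟩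
  · obtain ⟨C, hC⟩ := exists_forall_abs_le ϕ ψ hfix hA
    have hgraph : {p : M × ℝ | p.2 = A p.1} = ⋂ s, {p | ψ s p.1 = ϕ (p.2 * s) p.1} := by
      ext p
      simp only [mem_ofPred_eq, mem_iInter]
      exact ⟨fun h s => h ▸ hA p.1 s, hA_unique p.1 p.2⟩
    refine continuous_of_isClosed_graph_of_mapsTo isCompact_Icc (fun x => abs_le.mp (hC x)) ?_
    rw [hgraph]
    exact isClosed_iInter fun s => isClosed_eq (ψ.continuous continuous_const continuous_fst)
      (ϕ.continuous (continuous_snd.mul continuous_const) continuous_fst)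
  · rw [hcomm, hA, ← ϕ.map_add, ← ϕ.map_add, add_comm]

end Flow

/-- A separating fixed-point-free continuous flow on a compact metric
space has a quasi-trivial centralizer. -/
theorem stmt_0 {M : Type*} [MetricSpace M] [CompactSpace M]
    (φ : ℝ → M → M)
    (hφcont : Continuous fun p : ℝ × M => φ p.1 p.2)
    (hφ0 : ∀ x, φ 0 x = x)
    (hφadd : ∀ t s x, φ (t + s) x = φ t (φ s x))
    (hnofix : ∀ x : M, ∃ t : ℝ, φ t x ≠ x)
    (hsep : ∃ δ > 0, ∀ x y : M, (∀ t : ℝ, dist (φ t x) (φ t y) < δ) →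
      ∃ s : ℝ, φ s x = y)
    (ψ : ℝ → M → M)
    (hψcont : Continuous fun p : ℝ × M => ψ p.1 p.2)
    (hψ0 : ∀ x, ψ 0 x = x)
    (hψadd : ∀ t s x, ψ (t + s) x = ψ t (ψ s x))
    (hcomm : ∀ s t : ℝ, ∀ x : M, ψ s (φ t x) = φ t (ψ s x)) :
    ∃ A : M → ℝ, Continuous A ∧ (∀ x : M, ∀ t : ℝ, A (φ t x) = A x) ∧
      ∀ x : M, ∀ t : ℝ, ψ t x = φ (A x * t) x :=
  Flow.exists_continuous_invariant_of_isSeparating ⟨φ, hφcont, hφadd, hφ0⟩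
    ⟨ψ, hψcont, hψadd, hψ0⟩ hnofix hsep hcomm
end

section
/- Let d≥1, M a compact metric space, and Φ:ℝ^d×M→M a continuous ℝ^d-action. If there exists v∈ℝ^d such that the flow (Φ_{tv})_{t∈ℝ} is separating and has no fixed points, then for every x∈M the orbit Orb(x,Φ)={Φ_u(x) : u∈ℝ^d} coincides with the orbit {Φ_{tv}(x) : t∈ℝ} of the flow (Φ_{tv})_{t∈ℝ}; in particular every Φ-orbit is a curve in M. -/
/-- If some direction `v` of a continuous `ℝ^d`-action generates a
fixed-point-free separating flow, then every orbit of the action coincides with the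
orbit of that flow. -/
theorem stmt_1 {d : ℕ} (hd : 1 ≤ d) {M : Type*} [MetricSpace M] [CompactSpace M]
    (Φ : EuclideanSpace ℝ (Fin d) → M → M)
    (hΦcont : Continuous fun p : EuclideanSpace ℝ (Fin d) × M => Φ p.1 p.2)
    (hΦ0 : ∀ x, Φ 0 x = x)
    (hΦadd : ∀ u v : EuclideanSpace ℝ (Fin d), ∀ x : M, Φ (u + v) x = Φ u (Φ v x))
    (v : EuclideanSpace ℝ (Fin d))
    (hnofix : ∀ x : M, ∃ t : ℝ, Φ (t • v) x ≠ x)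
    (hsep : ∃ δ > 0, ∀ x y : M, (∀ t : ℝ, dist (Φ (t • v) x) (Φ (t • v) y) < δ) →
      ∃ s : ℝ, Φ (s • v) x = y) :
    ∀ x : M, {y : M | ∃ u : EuclideanSpace ℝ (Fin d), Φ u x = y} =
      {y : M | ∃ t : ℝ, Φ (t • v) x = y} := by
  obtain ⟨δ, hδ, hsep⟩ := hsep
  -- Key: small displacements stay on the flow orbit, uniformly over base points.
  have key : ∃ ε > 0, ∀ u : EuclideanSpace ℝ (Fin d), ‖u‖ < ε → ∀ z : M,
      ∃ s : ℝ, Φ (s • v) z = Φ u z := by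
    have hopen : IsOpen {p : EuclideanSpace ℝ (Fin d) × M | dist (Φ p.1 p.2) p.2 < δ} := by
      have hc : Continuous fun p : EuclideanSpace ℝ (Fin d) × M => dist (Φ p.1 p.2) p.2 :=
        hΦcont.dist continuous_snd
      exact isOpen_lt hc continuous_const
    obtain ⟨V, W, hV, hW, h0V, hMW, hVW⟩ :=
      generalized_tube_lemma (isCompact_singleton : IsCompact {(0 : EuclideanSpace ℝ (Fin d))}) isCompact_univ hopen
        (by
          rintro ⟨u, z⟩ ⟨hu, -⟩
          simp only [Set.mem_singleton_iff] at hu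
          subst hu
          simp [hΦ0, hδ])
    obtain ⟨ε, hε, hball⟩ := Metric.isOpen_iff.mp hV 0 (h0V rfl)
    refine ⟨ε, hε, fun u hu z => ?_⟩
    have hsmall : ∀ w : M, dist (Φ u w) w < δ := by
      intro w
      have : (u, w) ∈ V ×ˢ W :=
        ⟨hball (by simpa [mem_ball_zero_iff] using hu), hMW (Set.mem_univ w)⟩
      exact hVW this
    apply hsep z (Φ u z)
    intro t
    have hcomm : Φ (t • v) (Φ u z) = Φ u (Φ (t • v) z) := by
      rw [← hΦadd, ← hΦadd, add_comm]
    rw [hcomm, dist_comm]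
    exact hsmall _
  obtain ⟨ε, hε, key⟩ := key
  intro x
  ext y
  simp only [Set.mem_setOf_eq]
  constructor
  · rintro ⟨u, rfl⟩
    obtain ⟨n, hn⟩ := exists_nat_gt (‖u‖ / ε)
    have hn0 : 0 < (n : ℝ) := lt_of_le_of_lt (div_nonneg (norm_nonneg _) hε.le) hn
    have hstep : ‖(1 / (n : ℝ)) • u‖ < ε := by
      rw [norm_smul]
      simp only [norm_div, norm_one, Real.norm_natCast]
      rw [div_mul_eq_mul_div, one_mul, div_lt_iff₀ hn0]
      calc ‖u‖ < n * ε := (div_lt_iff₀ hε).mp hn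
        _ = ε * n := mul_comm _ _
    have main : ∀ k : ℕ, ∃ s : ℝ, Φ (s • v) x = Φ (((k : ℝ) / n) • u) x := by
      intro k
      induction k with
      | zero => exact ⟨0, by simp [hΦ0]⟩
      | succ k ih =>
        obtain ⟨s, hs⟩ := ih
        obtain ⟨s', hs'⟩ := key ((1 / (n : ℝ)) • u) hstep (Φ (s • v) x)
        refine ⟨s' + s, ?_⟩
        have hsc : (((k + 1 : ℕ) : ℝ) / n) = 1 / (n : ℝ) + (k : ℝ) / n := by
          push_cast; ring
        rw [hsc, add_smul, add_smul, hΦadd, hΦadd, ← hs, ← hs']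
    obtain ⟨s, hs⟩ := main n
    refine ⟨s, ?_⟩
    rw [hs]
    congr 1
    rw [div_self (ne_of_gt hn0), one_smul]
  · rintro ⟨t, rfl⟩
    exact ⟨t • v, rfl⟩
end

section
/- Let M be a compact metric space, φ:ℝ×M→M a continuous flow without fixed points, ε₀(φ) = inf({τ>0 : ∃x∈M with φ_τ(x)=x and φ_t(x)≠x for all t∈(0,τ)} ∪ {1}), T₀∈(0, ε₀(φ)), and η>0 a constant with d(φ_{T₀}(y), y) ≥ η for all y∈M. Then there exist μ₁∈(0,T₀) and δ>0 such that for every x∈M, p∈ closed ball B̄_δ(x), t∈[−μ₁, μ₁], and τ∈[0,T₀]: (1) d(φ_t(p), x) < η/4; (2) d(φ_τ(p), φ_τ(x)) ≤ ημ₁/(12T₀); (3) d(φ_{μ₁/3}(x), x) ≥ 2δ and d(φ_{−μ₁/3}(x), x) ≥ 2δ. -/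
/-- Existence of constants `μ₁ ∈ (0,T₀)` and `δ > 0` with the three
stated uniform estimates (Lemma 2.3 of the paper). -/
theorem stmt_5 {M : Type*} [MetricSpace M] [CompactSpace M]
    (φ : ℝ → M → M)
    (hφcont : Continuous fun p : ℝ × M => φ p.1 p.2)
    (hφ0 : ∀ x, φ 0 x = x)
    (hφadd : ∀ t s x, φ (t + s) x = φ t (φ s x))
    (hnofix : ∀ x : M, ∃ t : ℝ, φ t x ≠ x)
    (ε₀ : ℝ)
    (hε₀ : ε₀ = sInf ({τ : ℝ | 0 < τ ∧ ∃ x : M, φ τ x = x ∧ ∀ t ∈ Set.Ioo 0 τ, φ t x ≠ x}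
      ∪ {1}))
    (T₀ : ℝ) (hT₀ : T₀ ∈ Set.Ioo 0 ε₀)
    (η : ℝ) (hη : 0 < η) (hηsep : ∀ y : M, dist (φ T₀ y) y ≥ η) :
    ∃ μ₁ ∈ Set.Ioo 0 T₀, ∃ δ > 0, ∀ x : M, ∀ p ∈ Metric.closedBall x δ,
      (∀ t ∈ Set.Icc (-μ₁) μ₁, dist (φ t p) x < η / 4) ∧
      (∀ τ ∈ Set.Icc 0 T₀, dist (φ τ p) (φ τ x) ≤ η * μ₁ / (12 * T₀)) ∧
      dist (φ (μ₁ / 3) x) x ≥ 2 * δ ∧ dist (φ (-(μ₁ / 3)) x) x ≥ 2 * δ := by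
  obtain ⟨hT₀pos, hT₀lt⟩ := hT₀
  rcases isEmpty_or_nonempty M with hM | hM
  · exact ⟨T₀ / 2, ⟨by linarith, by linarith⟩, 1, one_pos,
      fun x => (IsEmpty.false x).elim⟩
  -- uniform continuity on a compact slab
  have hKc : IsCompact ((Set.Icc (-T₀) T₀) ×ˢ (Set.univ : Set M)) :=
    isCompact_Icc.prod isCompact_univ
  have hUC : UniformContinuousOn (fun p : ℝ × M => φ p.1 p.2)
      ((Set.Icc (-T₀) T₀) ×ˢ (Set.univ : Set M)) :=
    hKc.uniformContinuousOn_of_continuous hφcont.continuousOn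
  rw [Metric.uniformContinuousOn_iff] at hUC
  have h8 : 0 < η / 8 := by linarith
  -- Stage 1: μ₁
  obtain ⟨d₁, hd₁, H₁⟩ := hUC (η / 8) h8
  set μ₁ := min d₁ T₀ / 2 with hμ₁def
  have hμ₁pos : 0 < μ₁ := half_pos (lt_min hd₁ hT₀pos)
  have hμ₁T : μ₁ ≤ T₀ / 2 := by
    have := min_le_right d₁ T₀; simp only [hμ₁def]; linarith
  have hμ₁d : μ₁ < d₁ := by
    have := min_le_left d₁ T₀; simp only [hμ₁def]; linarith
  have hμ₁lt : μ₁ < T₀ := by linarith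
  have hsmall : ∀ t : ℝ, |t| ≤ μ₁ → ∀ y : M, dist (φ t y) y < η / 8 := by
    intro t ht y
    have habs : -T₀ ≤ t ∧ t ≤ T₀ := by
      have := abs_le.mp ht; constructor <;> linarith
    have h1 : ((t, y) : ℝ × M) ∈ (Set.Icc (-T₀) T₀) ×ˢ (Set.univ : Set M) :=
      ⟨⟨habs.1, habs.2⟩, trivial⟩
    have h2 : (((0 : ℝ), y) : ℝ × M) ∈ (Set.Icc (-T₀) T₀) ×ˢ (Set.univ : Set M) :=
      ⟨⟨by norm_num; linarith, by norm_num; linarith⟩, trivial⟩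
    have hdist : dist ((t, y) : ℝ × M) ((0 : ℝ), y) < d₁ := by
      rw [Prod.dist_eq]
      simp only [dist_self, Real.dist_eq, sub_zero]
      have : max |t| 0 = |t| := max_eq_left (abs_nonneg t)
      rw [this]; linarith
    have := H₁ (t, y) h1 ((0 : ℝ), y) h2 hdist
    simpa [hφ0] using this
  -- no small periods
  have hnp : ∀ x : M, φ (μ₁ / 3) x ≠ x := by
    intro x hc
    set s := μ₁ / 3 with hs
    have hspos : 0 < s := by positivity
    have hper : ∀ n : ℕ, φ (n * s) x = x := by
      intro n
      induction n with
      | zero => simpa using hφ0 x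
      | succ n ih =>
        have : ((n : ℝ) + 1) * s = s + n * s := by ring
        rw [Nat.cast_succ, this, hφadd, ih, hc]
    set n := ⌊T₀ / s⌋₊ with hn
    have hns : (n : ℝ) * s ≤ T₀ := by
      have h1 : (n : ℝ) ≤ T₀ / s := Nat.floor_le (by positivity)
      calc (n : ℝ) * s ≤ (T₀ / s) * s := by nlinarith
        _ = T₀ := by field_simp
    have hrs : T₀ - n * s < s := by
      have h2 : T₀ / s < (n : ℝ) + 1 := Nat.lt_floor_add_one _
      have : T₀ < ((n : ℝ) + 1) * s := by
        calc T₀ = (T₀ / s) * s := by field_simp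
          _ < ((n : ℝ) + 1) * s := by nlinarith
      linarith
    have heq : φ T₀ x = φ (T₀ - n * s) x := by
      have h := hφadd (T₀ - n * s) (n * s) x
      rw [hper n] at h
      have he : T₀ - ↑n * s + ↑n * s = T₀ := by ring
      rw [he] at h
      exact h
    have hlt : dist (φ T₀ x) x < η / 8 := by
      rw [heq]
      apply hsmall
      rw [abs_of_nonneg (by linarith)]
      have : s ≤ μ₁ := by rw [hs]; linarith
      linarith
    have := hηsep x
    linarith
  have hnp' : ∀ x : M, φ (-(μ₁ / 3)) x ≠ x := by
    intro x hc
    apply hnp x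
    have := hφadd (μ₁ / 3) (-(μ₁ / 3)) x
    rw [hc] at this
    simpa [hφ0] using this.symm
  -- compact minimum
  have hcont1 : Continuous fun x : M => dist (φ (μ₁ / 3) x) x := by
    exact (hφcont.comp (continuous_const.prodMk continuous_id)).dist continuous_id
  have hcont2 : Continuous fun x : M => dist (φ (-(μ₁ / 3)) x) x := by
    exact (hφcont.comp (continuous_const.prodMk continuous_id)).dist continuous_id
  obtain ⟨x₀, -, hx₀⟩ := isCompact_univ.exists_isMinOn Set.univ_nonempty
    ((hcont1.min hcont2).continuousOn)
  set m := min (dist (φ (μ₁ / 3) x₀) x₀) (dist (φ (-(μ₁ / 3)) x₀) x₀) with hm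
  have hmpos : 0 < m :=
    lt_min (dist_pos.mpr (hnp x₀)) (dist_pos.mpr (hnp' x₀))
  -- Stage 2: δ
  set ε' := min (η / 8) (η * μ₁ / (12 * T₀)) with hε'
  have hε'pos : 0 < ε' := lt_min h8 (by positivity)
  obtain ⟨d₂, hd₂, H₂⟩ := hUC ε' hε'pos
  set δ := min (d₂ / 2) (m / 2) with hδ
  have hδpos : 0 < δ := lt_min (by linarith) (by linarith)
  have hclose : ∀ τ ∈ Set.Icc (-T₀) T₀, ∀ x p : M, dist p x ≤ δ →
      dist (φ τ p) (φ τ x) < ε' := by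
    intro τ hτ x p hpx
    have h1 : ((τ, p) : ℝ × M) ∈ (Set.Icc (-T₀) T₀) ×ˢ (Set.univ : Set M) :=
      ⟨hτ, trivial⟩
    have h2 : ((τ, x) : ℝ × M) ∈ (Set.Icc (-T₀) T₀) ×ˢ (Set.univ : Set M) :=
      ⟨hτ, trivial⟩
    have hdist : dist ((τ, p) : ℝ × M) (τ, x) < d₂ := by
      rw [Prod.dist_eq]
      simp only [dist_self]
      have hδd : δ ≤ d₂ / 2 := min_le_left _ _
      have : max 0 (dist p x) = dist p x := max_eq_right dist_nonneg
      rw [this]; linarith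
    exact H₂ (τ, p) h1 (τ, x) h2 hdist
  refine ⟨μ₁, ⟨hμ₁pos, hμ₁lt⟩, δ, hδpos, fun x p hp => ⟨?_, ?_, ?_, ?_⟩⟩
  · intro t ht
    obtain ⟨ht1, ht2⟩ := ht
    have hpx : dist p x ≤ δ := Metric.mem_closedBall.mp hp
    have hA : dist (φ t p) (φ t x) < ε' :=
      hclose t ⟨by linarith, by linarith⟩ x p hpx
    have hB : dist (φ t x) x < η / 8 := hsmall t (abs_le.mpr ⟨ht1, ht2⟩) x
    have hε'le : ε' ≤ η / 8 := min_le_left _ _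
    calc dist (φ t p) x ≤ dist (φ t p) (φ t x) + dist (φ t x) x := dist_triangle _ _ _
      _ < η / 4 := by linarith
  · intro τ hτ
    obtain ⟨hτ1, hτ2⟩ := hτ
    have hpx : dist p x ≤ δ := Metric.mem_closedBall.mp hp
    have hA : dist (φ τ p) (φ τ x) < ε' :=
      hclose τ ⟨by linarith, hτ2⟩ x p hpx
    have hε'le : ε' ≤ η * μ₁ / (12 * T₀) := min_le_right _ _
    linarith
  · have h1 : m ≤ min (dist (φ (μ₁ / 3) x) x) (dist (φ (-(μ₁ / 3)) x) x) := hx₀ (Set.mem_univ x)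
    have h2 : δ ≤ m / 2 := min_le_right _ _
    have := min_le_left (dist (φ (μ₁ / 3) x) x) (dist (φ (-(μ₁ / 3)) x) x)
    linarith
  · have h1 : m ≤ min (dist (φ (μ₁ / 3) x) x) (dist (φ (-(μ₁ / 3)) x) x) := hx₀ (Set.mem_univ x)
    have h2 : δ ≤ m / 2 := min_le_right _ _
    have := min_le_right (dist (φ (μ₁ / 3) x) x) (dist (φ (-(μ₁ / 3)) x) x)
    linarith
end

section
/- Let M be a compact metric space, φ:ℝ×M→M a continuous flow, T₀>0, η>0 with d(φ_{T₀}(y), y) ≥ η for all y∈M, and suppose μ₁>0 and δ>0 are such that d(φ_t(p), x) < η/4 for all x∈M, p∈ closed ball B̄_δ(x), and t∈[−μ₁, μ₁]. Then for all x∈M, p∈B̄_δ(x) and t∈[−μ₁, μ₁] one has d(φ_{t+T₀}(p), x) − d(φ_t(p), x) > η/2; consequently, for each such x and p the function t ↦ ∫₀^{T₀} d(φ_{t+s}(p), x) ds is strictly increasing on [−μ₁, μ₁]. -/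
/-- Under the stated hypotheses, `d(φ_{t+T₀}(p), x) − d(φ_t(p), x) > η/2`,
and consequently `t ↦ ∫₀^{T₀} d(φ_{t+s}(p), x) ds` is strictly increasing on `[−μ₁, μ₁]`. -/
theorem stmt_7 {M : Type*} [MetricSpace M] [CompactSpace M]
    (φ : ℝ → M → M)
    (hφcont : Continuous fun p : ℝ × M => φ p.1 p.2)
    (hφ0 : ∀ x, φ 0 x = x)
    (hφadd : ∀ t s x, φ (t + s) x = φ t (φ s x))
    (T₀ η : ℝ) (hT₀ : 0 < T₀) (hη : 0 < η)
    (hηsep : ∀ y : M, dist (φ T₀ y) y ≥ η)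
    (μ₁ δ : ℝ) (hμ₁ : 0 < μ₁) (hδ : 0 < δ)
    (hclose : ∀ x : M, ∀ p ∈ Metric.closedBall x δ, ∀ t ∈ Set.Icc (-μ₁) μ₁,
      dist (φ t p) x < η / 4) :
    ∀ x : M, ∀ p ∈ Metric.closedBall x δ,
      (∀ t ∈ Set.Icc (-μ₁) μ₁, dist (φ (t + T₀) p) x - dist (φ t p) x > η / 2) ∧
      StrictMonoOn (fun t : ℝ => ∫ s in (0:ℝ)..T₀, dist (φ (t + s) p) x)
        (Set.Icc (-μ₁) μ₁) := by
  intro x p hp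
  set f : ℝ → ℝ := fun s => dist (φ s p) x with hf
  have hfc : Continuous f := by
    have : Continuous fun s : ℝ => φ s p :=
      hφcont.comp (continuous_id.prodMk continuous_const)
    exact this.dist continuous_const
  have key : ∀ t ∈ Set.Icc (-μ₁) μ₁, dist (φ (t + T₀) p) x - dist (φ t p) x > η / 2 := by
    intro t ht
    have h1 : dist (φ t p) x < η / 4 := hclose x p hp t ht
    have h2 : dist (φ T₀ (φ t p)) (φ t p) ≥ η := hηsep (φ t p)
    have h3 : φ (t + T₀) p = φ T₀ (φ t p) := by rw [add_comm]; exact hφadd T₀ t p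
    have h4 : dist (φ T₀ (φ t p)) (φ t p) ≤ dist (φ T₀ (φ t p)) x + dist (φ t p) x := by
      rw [dist_comm (φ t p) x]
      exact dist_triangle _ _ _
    rw [h3]
    linarith
  refine ⟨key, ?_⟩
  have hF : ∀ t : ℝ, (∫ s in (0:ℝ)..T₀, dist (φ (t + s) p) x) = ∫ s in t..(t + T₀), f s := by
    intro t
    rw [show (∫ s in (0:ℝ)..T₀, dist (φ (t + s) p) x) = ∫ s in (0:ℝ)..T₀, f (t + s) from rfl,
      intervalIntegral.integral_comp_add_left f t, add_zero]
  intro a ha b hb hab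
  simp only [hF]
  have hint : ∀ u v : ℝ, IntervalIntegrable f MeasureTheory.volume u v :=
    fun u v => hfc.intervalIntegrable u v
  have e1 : (∫ s in a..(a + T₀), f s) + ∫ s in (a + T₀)..(b + T₀), f s
      = ∫ s in a..(b + T₀), f s :=
    intervalIntegral.integral_add_adjacent_intervals (hint _ _) (hint _ _)
  have e2 : (∫ s in a..b, f s) + ∫ s in b..(b + T₀), f s = ∫ s in a..(b + T₀), f s :=
    intervalIntegral.integral_add_adjacent_intervals (hint _ _) (hint _ _)
  have e3 : (∫ s in (a + T₀)..(b + T₀), f s) = ∫ s in a..b, f (s + T₀) := by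
    rw [intervalIntegral.integral_comp_add_right f T₀]
  have hcont2 : Continuous fun s : ℝ => f (s + T₀) := hfc.comp (by continuity)
  have e4 : (∫ s in a..b, f (s + T₀)) - (∫ s in a..b, f s)
      = ∫ s in a..b, (f (s + T₀) - f s) := by
    rw [intervalIntegral.integral_sub (hcont2.intervalIntegrable a b) (hint a b)]
  have hsub : Set.Icc a b ⊆ Set.Icc (-μ₁) μ₁ := Set.Icc_subset_Icc ha.1 hb.2
  have hlow : (∫ s in a..b, (η / 2 : ℝ)) ≤ ∫ s in a..b, (f (s + T₀) - f s) := by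
    apply intervalIntegral.integral_mono_on hab.le (intervalIntegrable_const)
    · exact (hcont2.sub hfc).intervalIntegrable a b
    · intro s hs
      exact (key s (hsub hs)).le
  have hconst : (∫ s in a..b, (η / 2 : ℝ)) = (b - a) * η / 2 := by simp
  have hpos : 0 < (b - a) * η / 2 := by
    have : 0 < b - a := sub_pos.mpr hab
    positivity
  linarith [e1, e2, e3, e4, hlow, hconst]
end

section
/- Let M be a compact metric space, φ:ℝ×M→M a continuous flow without fixed points, ε₀(φ) = inf({τ>0 : ∃x∈M with φ_τ(x)=x and φ_t(x)≠x for all t∈(0,τ)} ∪ {1}), ψ a continuous flow commuting with φ, a>0, μ∈(0, ε₀(φ)/3), and z:[−a,a]×M→[−μ,μ] a function with ψ_s(x) = φ_{z(s,x)}(x) for all (s,x)∈[−a,a]×M. Then: (i) z(t+s, x) = z(t,x) + z(s, ψ_t(x)) for all x∈M and t,s∈[−a,a] with t+s∈[−a,a]; and (ii) z(s, φ_t(x)) = z(s, x) for all x∈M, s∈[−a,a], and t∈ℝ. -/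
open Set in
private lemma key {M : Type*} [MetricSpace M]
    (φ : ℝ → M → M)
    (hφcont : Continuous fun p : ℝ × M => φ p.1 p.2)
    (hφ0 : ∀ x, φ 0 x = x)
    (hφadd : ∀ t s x, φ (t + s) x = φ t (φ s x))
    (hnofix : ∀ x : M, ∃ t : ℝ, φ t x ≠ x)
    (ε₀ : ℝ)
    (hε₀ : ε₀ = sInf ({τ : ℝ | 0 < τ ∧ ∃ x : M, φ τ x = x ∧ ∀ t ∈ Set.Ioo 0 τ, φ t x ≠ x}
      ∪ {1}))
    (x : M) (c : ℝ) (hc : φ c x = x) (hlt : |c| < ε₀) : c = 0 := by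
  by_contra hc0
  -- the period set of x as an additive subgroup
  set P : AddSubgroup ℝ :=
    { carrier := {t : ℝ | φ t x = x}
      zero_mem' := hφ0 x
      add_mem' := by
        intro s t hs ht
        simp only [Set.mem_setOf_eq] at *
        rw [hφadd, ht, hs]
      neg_mem' := by
        intro t ht
        simp only [Set.mem_setOf_eq] at *
        have := hφadd (-t) t x
        rw [ht, neg_add_cancel, hφ0] at this
        exact this.symm } with hP
  have hPclosed : IsClosed (P : Set ℝ) := by
    have : (P : Set ℝ) = (fun t => φ t x) ⁻¹' {x} := rfl
    rw [this]
    exact (isClosed_singleton.preimage (hφcont.comp (continuous_id.prodMk continuous_const)))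
  rcases P.dense_or_cyclic with hdense | ⟨g, hg⟩
  · -- dense closed subgroup = everything, so x fixed; contradiction
    obtain ⟨t, ht⟩ := hnofix x
    have : t ∈ (P : Set ℝ) := by
      rw [← hPclosed.closure_eq, hdense.closure_eq]; trivial
    exact ht this
  · -- cyclic
    have hcP : c ∈ P := hc
    rw [hg, AddSubgroup.mem_closure_singleton] at hcP
    obtain ⟨n, hn⟩ := hcP
    have hg0 : g ≠ 0 := by rintro rfl; simp at hn; exact hc0 hn.symm
    have hn0 : n ≠ 0 := by rintro rfl; simp at hn; exact hc0 hn.symm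
    have hgabs : |g| ≤ |c| := by
      rw [← hn, abs_zsmul, zsmul_eq_mul, Int.cast_abs]
      calc |g| = 1 * |g| := (one_mul _).symm
      _ ≤ |(n:ℝ)| * |g| := by
        apply mul_le_mul_of_nonneg_right _ (abs_nonneg g)
        exact_mod_cast Int.one_le_abs hn0
    -- |g| is a minimal period
    have hgmem : |g| ∈ (P : Set ℝ) := by
      rcases abs_choice g with h | h <;> rw [h]
      · exact SetLike.mem_coe.mpr (hg ▸ AddSubgroup.mem_closure_singleton.mpr ⟨1, one_zsmul g⟩)
      · exact SetLike.mem_coe.mpr (P.neg_mem (hg ▸ AddSubgroup.mem_closure_singleton.mpr ⟨1, one_zsmul g⟩))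
    have hmin : ∀ t ∈ Set.Ioo 0 |g|, φ t x ≠ x := by
      intro t ht htx
      have : t ∈ P := htx
      rw [hg, AddSubgroup.mem_closure_singleton] at this
      obtain ⟨m, hm⟩ := this
      have heq : |t| = |(m:ℝ)| * |g| := by rw [← hm, abs_zsmul, zsmul_eq_mul, Int.cast_abs]
      rw [abs_of_pos ht.1] at heq
      rcases eq_or_ne m 0 with rfl | hm0
      · simp at heq; exact ht.1.ne' heq
      · have hle : (1 : ℝ) * |g| ≤ |(m:ℝ)| * |g| := by
          apply mul_le_mul_of_nonneg_right _ (abs_nonneg g)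
          exact_mod_cast Int.one_le_abs hm0
        rw [one_mul] at hle
        linarith [ht.2]
    have habsg_pos : 0 < |g| := abs_pos.mpr hg0
    have hεle : ε₀ ≤ |g| := by
      rw [hε₀]
      apply csInf_le
      · refine ⟨0, ?_⟩
        rintro τ (⟨hτ, -⟩ | rfl) <;> [exact hτ.le; norm_num]
      · exact Or.inl ⟨habsg_pos, x, hgmem, hmin⟩
    linarith [hgabs, hlt]


/-- Cocycle-type identities for the reparametrization function `z`. -/
theorem stmt_11 {M : Type*} [MetricSpace M] [CompactSpace M]
    (φ : ℝ → M → M)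
    (hφcont : Continuous fun p : ℝ × M => φ p.1 p.2)
    (hφ0 : ∀ x, φ 0 x = x)
    (hφadd : ∀ t s x, φ (t + s) x = φ t (φ s x))
    (hnofix : ∀ x : M, ∃ t : ℝ, φ t x ≠ x)
    (ε₀ : ℝ)
    (hε₀ : ε₀ = sInf ({τ : ℝ | 0 < τ ∧ ∃ x : M, φ τ x = x ∧ ∀ t ∈ Set.Ioo 0 τ, φ t x ≠ x}
      ∪ {1}))
    (ψ : ℝ → M → M)
    (hψcont : Continuous fun p : ℝ × M => ψ p.1 p.2)
    (hψ0 : ∀ x, ψ 0 x = x)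
    (hψadd : ∀ t s x, ψ (t + s) x = ψ t (ψ s x))
    (hcomm : ∀ s t : ℝ, ∀ x : M, ψ s (φ t x) = φ t (ψ s x))
    (a μ : ℝ) (ha : 0 < a) (hμ : μ ∈ Set.Ioo 0 (ε₀ / 3))
    (z : ℝ → M → ℝ)
    (hz : ∀ s ∈ Set.Icc (-a) a, ∀ x : M,
      z s x ∈ Set.Icc (-μ) μ ∧ ψ s x = φ (z s x) x) :
    (∀ x : M, ∀ t s : ℝ, t ∈ Set.Icc (-a) a → s ∈ Set.Icc (-a) a →
      t + s ∈ Set.Icc (-a) a → z (t + s) x = z t x + z s (ψ t x)) ∧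
    (∀ x : M, ∀ s ∈ Set.Icc (-a) a, ∀ t : ℝ, z s (φ t x) = z s x) := by
  have cancel : ∀ (y : M) (u v : ℝ), φ u y = φ v y → φ (u - v) y = y := by
    intro y u v h
    have h1 : φ (-v) (φ u y) = φ (-v) (φ v y) := by rw [h]
    rw [← hφadd, ← hφadd, neg_add_cancel, hφ0] at h1
    have h2 : -v + u = u - v := by ring
    rwa [h2] at h1
  have zkey := key φ hφcont hφ0 hφadd hnofix ε₀ hε₀
  obtain ⟨hμ0, hμε⟩ := hμ
  constructor
  · intro x t s hta hsa htsa
    obtain ⟨hb1, he1⟩ := hz (t + s) htsa x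
    obtain ⟨hb2, he2⟩ := hz t hta x
    obtain ⟨hb3, he3⟩ := hz s hsa (ψ t x)
    have heq : φ (z (t + s) x) x = φ (z s (ψ t x) + z t x) x := by
      rw [hφadd, ← he2, ← he3, ← he1, ← hψadd, add_comm s t]
    have hc := cancel x _ _ heq
    have h0 := zkey x _ hc ?_
    · linarith [h0]
    · rw [abs_lt]
      constructor <;>
        [linarith [hb1.1, hb2.2, hb3.2]; linarith [hb1.2, hb2.1, hb3.1]]
  · intro x s hsa t
    obtain ⟨hb1, he1⟩ := hz s hsa (φ t x)
    obtain ⟨hb2, he2⟩ := hz s hsa x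
    have heq : φ (z s (φ t x) + t) x = φ (z s x + t) x := by
      rw [hφadd, ← he1, hcomm, he2, ← hφadd, add_comm t (z s x)]
    have hc := cancel x _ _ heq
    have h2 : z s (φ t x) + t - (z s x + t) = z s (φ t x) - z s x := by ring
    rw [h2] at hc
    have h0 := zkey x _ hc ?_
    · linarith [h0]
    · rw [abs_lt]
      constructor <;> [linarith [hb1.1, hb2.2]; linarith [hb1.2, hb2.1]]
end

section
/- Let M be a compact metric space, φ:ℝ×M→M a continuous flow without fixed points, ε₀(φ) = inf({τ>0 : ∃x∈M with φ_τ(x)=x and φ_t(x)≠x for all t∈(0,τ)} ∪ {1}), ψ a continuous flow commuting with φ, a>0, μ∈(0, ε₀(φ)/3), and z:[−a,a]×M→[−μ,μ] a continuous function with ψ_s(x) = φ_{z(s,x)}(x) for all (s,x)∈[−a,a]×M. Then z(s,x) = A(x)·s for all x∈M and s∈[−a,a], where A(x) = a⁻¹ z(a,x). -/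
/-- The reparametrization function is linear in time:
`z(s,x) = A(x)·s` with `A(x) = a⁻¹ z(a,x)`. -/
theorem stmt_12 {M : Type*} [MetricSpace M] [CompactSpace M]
    (φ : ℝ → M → M)
    (hφcont : Continuous fun p : ℝ × M => φ p.1 p.2)
    (hφ0 : ∀ x, φ 0 x = x)
    (hφadd : ∀ t s x, φ (t + s) x = φ t (φ s x))
    (hnofix : ∀ x : M, ∃ t : ℝ, φ t x ≠ x)
    (ε₀ : ℝ)
    (hε₀ : ε₀ = sInf ({τ : ℝ | 0 < τ ∧ ∃ x : M, φ τ x = x ∧ ∀ t ∈ Set.Ioo 0 τ, φ t x ≠ x}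
      ∪ {1}))
    (ψ : ℝ → M → M)
    (hψcont : Continuous fun p : ℝ × M => ψ p.1 p.2)
    (hψ0 : ∀ x, ψ 0 x = x)
    (hψadd : ∀ t s x, ψ (t + s) x = ψ t (ψ s x))
    (hcomm : ∀ s t : ℝ, ∀ x : M, ψ s (φ t x) = φ t (ψ s x))
    (a μ : ℝ) (ha : 0 < a) (hμ : μ ∈ Set.Ioo 0 (ε₀ / 3))
    (z : ℝ → M → ℝ)
    (hzcont : ContinuousOn (fun p : ℝ × M => z p.1 p.2) (Set.Icc (-a) a ×ˢ Set.univ))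
    (hz : ∀ s ∈ Set.Icc (-a) a, ∀ x : M,
      z s x ∈ Set.Icc (-μ) μ ∧ ψ s x = φ (z s x) x) :
    ∀ x : M, ∀ s ∈ Set.Icc (-a) a, z s x = (a⁻¹ * z a x) * s := by
  obtain ⟨hμ0, hμε⟩ := hμ
  have hε₀pos : 0 < ε₀ := by linarith
  have h3μ : 3 * μ < ε₀ := by linarith
  -- bounded below
  have hbdd : BddBelow ({τ : ℝ | 0 < τ ∧ ∃ x : M, φ τ x = x ∧ ∀ t ∈ Set.Ioo 0 τ, φ t x ≠ x}
      ∪ {1}) := by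
    refine ⟨0, ?_⟩
    rintro τ (⟨hτ, -⟩ | hτ)
    · exact le_of_lt hτ
    · simp only [Set.mem_singleton_iff] at hτ; linarith [hτ]
  -- key injectivity lemma
  have key : ∀ (y : M) (t : ℝ), |t| < ε₀ → φ t y = y → t = 0 := by
    intro y t ht hty
    by_contra htne
    set S : AddSubgroup ℝ :=
      { carrier := {s : ℝ | φ s y = y}
        zero_mem' := hφ0 y
        add_mem' := by
          intro s s' hs hs'
          simp only [Set.mem_setOf_eq] at *
          rw [hφadd, hs', hs]
        neg_mem' := by
          intro s hs
          simp only [Set.mem_setOf_eq] at *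
          conv_lhs => rw [← hs]
          rw [← hφadd]
          simp [hφ0] } with hSdef
    have htS : t ∈ S := hty
    have hSclosed : IsClosed (S : Set ℝ) := by
      have : Continuous fun s : ℝ => φ s y :=
        hφcont.comp (continuous_id.prodMk continuous_const)
      exact isClosed_eq this continuous_const
    rcases S.dense_or_cyclic with hd | ⟨g, hg⟩
    · have : (S : Set ℝ) = Set.univ := hSclosed.closure_eq ▸ hd.closure_eq
      obtain ⟨t', ht'⟩ := hnofix y
      exact ht' (by have : t' ∈ (S : Set ℝ) := this ▸ Set.mem_univ t'; exact this)
    · have hgne : g ≠ 0 := by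
        rintro rfl
        rw [hg] at htS
        obtain ⟨n, hn⟩ := AddSubgroup.mem_closure_singleton.mp htS
        simp at hn
        exact htne hn.symm
      set a0 := |g| with ha0def
      have ha0pos : 0 < a0 := abs_pos.mpr hgne
      have ha0S : a0 ∈ S := by
        rcases abs_choice g with h | h
        · rw [ha0def, h]; rw [hg]; exact AddSubgroup.mem_closure_singleton.mpr ⟨1, one_smul _ _⟩
        · rw [ha0def, h]; rw [hg]
          exact AddSubgroup.mem_closure_singleton.mpr ⟨-1, by simp⟩
      have hmem : a0 ∈ ({τ : ℝ | 0 < τ ∧ ∃ x : M, φ τ x = x ∧ ∀ t ∈ Set.Ioo 0 τ, φ t x ≠ x}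
          ∪ {1}) := by
        left
        refine ⟨ha0pos, y, ha0S, ?_⟩
        intro s hs hsy
        have hsS : s ∈ S := hsy
        rw [hg] at hsS
        obtain ⟨m, hm⟩ := AddSubgroup.mem_closure_singleton.mp hsS
        have : |s| = |(m : ℝ)| * a0 := by
          rw [← hm, ha0def]; simp [abs_mul]
        rcases eq_or_ne m 0 with rfl | hmne
        · simp at hm; exact absurd hm.symm (ne_of_gt hs.1)
        · have h1 : (1 : ℝ) ≤ |(m : ℝ)| := by
            rw [← Int.cast_abs]; exact_mod_cast Int.one_le_abs hmne
          have : a0 ≤ |s| := by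
            rw [this]; nlinarith
          rw [abs_of_pos hs.1] at this
          linarith [hs.2]
      have hle : ε₀ ≤ a0 := hε₀ ▸ csInf_le hbdd hmem
      -- t ∈ S = closure {g}, |t| < ε₀ ≤ a0 ⇒ t = 0
      rw [hg] at htS
      obtain ⟨n, hn⟩ := AddSubgroup.mem_closure_singleton.mp htS
      rcases eq_or_ne n 0 with rfl | hnne
      · simp at hn; exact htne hn.symm
      · have h1 : (1 : ℝ) ≤ |(n : ℝ)| := by
          rw [← Int.cast_abs]; exact_mod_cast Int.one_le_abs hnne
        have : |t| = |(n : ℝ)| * a0 := by rw [← hn, ha0def]; simp [abs_mul]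
        nlinarith
  have key2 : ∀ (y : M) (t t' : ℝ), |t - t'| < ε₀ → φ t y = φ t' y → t = t' := by
    intro y t t' ht h
    have : φ (t - t') (φ t' y) = φ t' y := by
      rw [← hφadd, sub_add_cancel, h]
    have := key (φ t' y) (t - t') ht this
    linarith [this, abs_nonneg (t - t')]
  intro x
  set f : ℝ → ℝ := fun s => z s x with hfdef
  have hfb : ∀ s ∈ Set.Icc (-a) a, |f s| ≤ μ := by
    intro s hs
    have := (hz s hs x).1
    rw [Set.mem_Icc] at this
    exact abs_le.mpr this
  have hmem0 : (0 : ℝ) ∈ Set.Icc (-a) a := by constructor <;> linarith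
  have hmema : a ∈ Set.Icc (-a) a := by constructor <;> linarith
  -- additivity
  have hadd : ∀ s s', s ∈ Set.Icc (-a) a → s' ∈ Set.Icc (-a) a → s + s' ∈ Set.Icc (-a) a →
      f (s + s') = f s + f s' := by
    intro s s' hs hs' hss
    have e1 : ψ (s + s') x = φ (f (s + s')) x := (hz _ hss x).2
    have e2 : ψ (s + s') x = φ (f s' + f s) x := by
      rw [hψadd, (hz s' hs' x).2, hcomm, (hz s hs x).2, ← hφadd]
    have := key2 x (f (s + s')) (f s' + f s) ?_ (e1.symm.trans e2)
    · rw [this]; ring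
    · have h1 := hfb _ hss
      have h2 := hfb _ hs
      have h3 := hfb _ hs'
      rw [abs_sub_lt_iff]
      constructor <;>
        [skip; skip] <;>
        (have := abs_le.mp h1; have := abs_le.mp h2; have := abs_le.mp h3; linarith)
  have hf0 : f 0 = 0 := by
    have := hadd 0 0 hmem0 hmem0 (by simpa using hmem0)
    simp at this
    linarith
  set c : ℝ := a⁻¹ * z a x with hcdef
  -- f(a/2^n) = f a / 2^n
  have hmemdiv : ∀ n : ℕ, a / 2 ^ n ∈ Set.Icc (-a) a := by
    intro n
    have h1 : (1 : ℝ) ≤ 2 ^ n := one_le_pow₀ (by norm_num)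
    have h2 : (0:ℝ) < 2 ^ n := by positivity
    constructor
    · have : 0 < a / 2 ^ n := by positivity
      linarith
    · rw [div_le_iff₀ h2]; nlinarith
  have hhalf : ∀ n : ℕ, f (a / 2 ^ n) = f a / 2 ^ n := by
    intro n
    induction n with
    | zero => simp
    | succ n ih =>
      have hsum : a / 2 ^ (n + 1) + a / 2 ^ (n + 1) = a / 2 ^ n := by
        rw [pow_succ]; ring
      have := hadd (a / 2 ^ (n + 1)) (a / 2 ^ (n + 1)) (hmemdiv _) (hmemdiv _)
        (by rw [hsum]; exact hmemdiv n)
      rw [hsum, ih] at this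
      have h2 : (0:ℝ) < 2 ^ n := by positivity
      have heq : f (a / 2 ^ (n + 1)) = f a / 2 ^ n / 2 := by linarith
      rw [heq, pow_succ, ← div_div]
  -- f (k * (a/2^n)) = k * f(a/2^n) for k ≤ 2^n
  have hmul : ∀ n : ℕ, ∀ k : ℕ, k ≤ 2 ^ n → f (k * (a / 2 ^ n)) = k * f (a / 2 ^ n) := by
    intro n k hk
    induction k with
    | zero => simpa using hf0
    | succ k ih =>
      have hk' : k ≤ 2 ^ n := Nat.le_of_succ_le hk
      have h2 : (0:ℝ) < 2 ^ n := by positivity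
      have hdiv : 0 < a / 2 ^ n := by positivity
      have hmemk : ∀ j : ℕ, j ≤ 2 ^ n → (j : ℝ) * (a / 2 ^ n) ∈ Set.Icc (-a) a := by
        intro j hj
        have hj' : (j : ℝ) ≤ 2 ^ n := by exact_mod_cast hj
        constructor
        · nlinarith [mul_nonneg (Nat.cast_nonneg j : (0:ℝ) ≤ j) hdiv.le]
        · calc (j : ℝ) * (a / 2 ^ n) ≤ 2 ^ n * (a / 2 ^ n) := by nlinarith
            _ = a := by field_simp
      have hsum : ((k + 1 : ℕ) : ℝ) * (a / 2 ^ n) = (k : ℝ) * (a / 2 ^ n) + a / 2 ^ n := by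
        push_cast; ring
      rw [hsum, hadd _ _ (hmemk k hk') (hmemdiv n) (by rw [← hsum]; exact hmemk _ hk),
        ih hk']
      push_cast; ring
  -- dyadic values
  have hdyadic : ∀ n : ℕ, ∀ k : ℕ, k ≤ 2 ^ n → f ((k : ℝ) * (a / 2 ^ n)) = c * ((k : ℝ) * (a / 2 ^ n)) := by
    intro n k hk
    rw [hmul n k hk, hhalf n, hcdef]
    have h2 : (0:ℝ) < 2 ^ n := by positivity
    field_simp
    ring
  -- continuity of f on Icc
  have hfc : ContinuousOn f (Set.Icc (-a) a) := by
    have : ContinuousOn (fun s : ℝ => ((s, x) : ℝ × M)) (Set.Icc (-a) a) :=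
      (continuous_id.prodMk continuous_const).continuousOn
    exact hzcont.comp this (fun s hs => ⟨hs, Set.mem_univ x⟩)
  -- positive case via limits
  have hpos : ∀ s ∈ Set.Icc 0 a, f s = c * s := by
    intro s hs
    obtain ⟨hs0, hsa⟩ := hs
    set d : ℕ → ℝ := fun n => (⌊s * 2 ^ n / a⌋₊ : ℝ) * (a / 2 ^ n) with hddef
    have h2 : ∀ n : ℕ, (0:ℝ) < 2 ^ n := fun n => by positivity
    have hkle : ∀ n : ℕ, ⌊s * 2 ^ n / a⌋₊ ≤ 2 ^ n := by
      intro n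
      apply Nat.floor_le_of_le
      rw [div_le_iff₀ ha]
      calc s * 2 ^ n ≤ a * 2 ^ n := by nlinarith [h2 n]
        _ = (2 ^ n : ℕ) * a := by push_cast; ring
    have hdmem : ∀ n, d n ∈ Set.Icc (-a) a := by
      intro n
      have hj' : ((⌊s * 2 ^ n / a⌋₊ : ℕ) : ℝ) ≤ 2 ^ n := by
        have := hkle n
        calc ((⌊s * 2 ^ n / a⌋₊ : ℕ) : ℝ) ≤ ((2 ^ n : ℕ) : ℝ) := by exact_mod_cast this
          _ = 2 ^ n := by push_cast; ring
      constructor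
      · have : (0:ℝ) ≤ d n := by
          apply mul_nonneg (Nat.cast_nonneg _)
          positivity
        linarith
      · rw [hddef]
        calc ((⌊s * 2 ^ n / a⌋₊ : ℕ) : ℝ) * (a / 2 ^ n) ≤ 2 ^ n * (a / 2 ^ n) := by
              apply mul_le_mul_of_nonneg_right hj'; positivity
          _ = a := by field_simp
    have hfd : ∀ n, f (d n) = c * d n := fun n => hdyadic n _ (hkle n)
    -- d n → s
    have hlow : ∀ n, s - a / 2 ^ n ≤ d n := by
      intro n
      have h1 : s * 2 ^ n / a - 1 ≤ (⌊s * 2 ^ n / a⌋₊ : ℝ) := by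
        have hnn : 0 ≤ s * 2 ^ n / a := by positivity
        have := Nat.lt_floor_add_one (s * 2 ^ n / a)
        linarith
      have : (s * 2 ^ n / a - 1) * (a / 2 ^ n) ≤ d n := by
        apply mul_le_mul_of_nonneg_right h1; positivity
      calc s - a / 2 ^ n = (s * 2 ^ n / a - 1) * (a / 2 ^ n) := by
            field_simp
        _ ≤ d n := this
    have hhigh : ∀ n, d n ≤ s := by
      intro n
      have h1 : (⌊s * 2 ^ n / a⌋₊ : ℝ) ≤ s * 2 ^ n / a := Nat.floor_le (by positivity)
      calc d n ≤ (s * 2 ^ n / a) * (a / 2 ^ n) := by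
            apply mul_le_mul_of_nonneg_right h1; positivity
        _ = s := by field_simp
    have hdtend : Filter.Tendsto d Filter.atTop (nhds s) := by
      have htl : Filter.Tendsto (fun n : ℕ => s - a / 2 ^ n) Filter.atTop (nhds s) := by
        have : Filter.Tendsto (fun n : ℕ => a / 2 ^ n) Filter.atTop (nhds 0) := by
          simp_rw [div_eq_mul_inv, ← inv_pow]
          rw [← mul_zero a]
          exact (tendsto_pow_atTop_nhds_zero_of_lt_one (by norm_num) (by norm_num)).const_mul a
        have := this.const_sub s
        simpa using this
      exact tendsto_of_tendsto_of_tendsto_of_le_of_le htl tendsto_const_nhds hlow hhigh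
    have hsmem : s ∈ Set.Icc (-a) a := ⟨by linarith, hsa⟩
    have hcw : ContinuousWithinAt f (Set.Icc (-a) a) s := hfc s hsmem
    have hdtend' : Filter.Tendsto d Filter.atTop (nhdsWithin s (Set.Icc (-a) a)) :=
      tendsto_nhdsWithin_of_tendsto_nhds_of_eventually_within d hdtend
        (Filter.Eventually.of_forall hdmem)
    have h1 : Filter.Tendsto (fun n => f (d n)) Filter.atTop (nhds (f s)) :=
      hcw.tendsto.comp hdtend'
    have h2' : Filter.Tendsto (fun n => f (d n)) Filter.atTop (nhds (c * s)) := by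
      simp_rw [hfd]
      exact hdtend.const_mul c
    exact tendsto_nhds_unique h1 h2'
  intro s hs
  rcases le_or_gt 0 s with h | h
  · exact hpos s ⟨h, hs.2⟩
  · have hmemneg : -s ∈ Set.Icc (-a) a := ⟨by linarith [hs.2], by linarith [hs.1]⟩
    have := hadd s (-s) hs hmemneg (by simpa using hmem0)
    rw [add_neg_cancel, hf0] at this
    have hneg := hpos (-s) ⟨by linarith, by linarith [hs.1]⟩
    have hfs : f s = - f (-s) := by linarith
    show f s = c * s
    rw [hfs, hneg]
    ring
end

section
/- Let M be a compact metric space, Φ:ℝ^d×M→M a continuous ℝ^d-action with ε₀(Φ) = inf({‖v‖ : v≠0, ∃x∈M with Φ_v(x)=x} ∪ {1}) > 0, Ψ a continuous ℝ^d-action commuting with Φ, a>0, μ∈(0, ε₀(Φ)/3), and z: Ō_a×M → Ō_μ a map with Ψ_u(x) = Φ_{z(u,x)}(x) for all (u,x)∈Ō_a×M, where Ō_r = {v∈ℝ^d : ‖v‖≤r}. Then z is continuous. -/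
open Topology Filter


/-- Continuity of the reparametrization map `z` for commuting
`ℝ^d`-actions. -/
theorem stmt_15 {d : ℕ} {M : Type*} [MetricSpace M] [CompactSpace M]
    (Φ : EuclideanSpace ℝ (Fin d) → M → M)
    (hΦcont : Continuous fun p : EuclideanSpace ℝ (Fin d) × M => Φ p.1 p.2)
    (hΦ0 : ∀ x, Φ 0 x = x)
    (hΦadd : ∀ u v : EuclideanSpace ℝ (Fin d), ∀ x : M, Φ (u + v) x = Φ u (Φ v x))
    (ε₀ : ℝ)
    (hε₀ : ε₀ = sInf ({r : ℝ | ∃ v : EuclideanSpace ℝ (Fin d),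
      v ≠ 0 ∧ ‖v‖ = r ∧ ∃ x : M, Φ v x = x} ∪ {1}))
    (hε₀pos : 0 < ε₀)
    (Ψ : EuclideanSpace ℝ (Fin d) → M → M)
    (hΨcont : Continuous fun p : EuclideanSpace ℝ (Fin d) × M => Ψ p.1 p.2)
    (hΨ0 : ∀ x, Ψ 0 x = x)
    (hΨadd : ∀ u v : EuclideanSpace ℝ (Fin d), ∀ x : M, Ψ (u + v) x = Ψ u (Ψ v x))
    (hcomm : ∀ u v : EuclideanSpace ℝ (Fin d), ∀ x : M, Φ v (Ψ u x) = Ψ u (Φ v x))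
    (a μ : ℝ) (ha : 0 < a) (hμ : μ ∈ Set.Ioo 0 (ε₀ / 3))
    (z : EuclideanSpace ℝ (Fin d) → M → EuclideanSpace ℝ (Fin d))
    (hz : ∀ u ∈ Metric.closedBall (0 : EuclideanSpace ℝ (Fin d)) a, ∀ x : M,
      z u x ∈ Metric.closedBall (0 : EuclideanSpace ℝ (Fin d)) μ ∧ Ψ u x = Φ (z u x) x) :
    ContinuousOn (fun p : EuclideanSpace ℝ (Fin d) × M => z p.1 p.2)
      (Metric.closedBall (0 : EuclideanSpace ℝ (Fin d)) a ×ˢ Set.univ) := by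
  obtain ⟨hμ0, hμε⟩ := hμ
  -- fixed points have large return vector
  have hfix : ∀ v : EuclideanSpace ℝ (Fin d), ‖v‖ < ε₀ → ∀ x : M, Φ v x = x → v = 0 := by
    intro v hv x hx
    by_contra hv0
    have hbdd : BddBelow ({r : ℝ | ∃ v : EuclideanSpace ℝ (Fin d),
        v ≠ 0 ∧ ‖v‖ = r ∧ ∃ x : M, Φ v x = x} ∪ {1}) := by
      refine ⟨0, ?_⟩
      rintro r (⟨w, _, hw, _⟩ | hr)
      · rw [← hw]; positivity
      · simp only [Set.mem_singleton_iff] at hr; linarith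
    have : ε₀ ≤ ‖v‖ := by
      rw [hε₀]; exact csInf_le hbdd (Or.inl ⟨v, hv0, rfl, x, hx⟩)
    linarith
  -- uniqueness of small reparametrization vectors
  have huniq : ∀ w w' : EuclideanSpace ℝ (Fin d), ‖w‖ ≤ μ → ‖w'‖ ≤ μ →
      ∀ x : M, Φ w x = Φ w' x → w = w' := by
    intro w w' hw hw' x hx
    have hy : Φ (w - w') (Φ w x) = Φ w x := by
      nth_rewrite 1 [hx]
      rw [← hΦadd, sub_add_cancel, hx]
    have hnorm : ‖w - w'‖ < ε₀ := by
      calc ‖w - w'‖ ≤ ‖w‖ + ‖w'‖ := norm_sub_le _ _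
        _ < ε₀ := by linarith
    exact sub_eq_zero.mp (hfix (w - w') hnorm (Φ w x) hy)
  intro p hp
  rw [ContinuousWithinAt, Filter.tendsto_iff_ultrafilter]
  intro g hg
  set S := Metric.closedBall (0 : EuclideanSpace ℝ (Fin d)) a ×ˢ
      (Set.univ : Set M) with hS
  have hgS : ∀ᶠ q in (g : Filter (EuclideanSpace ℝ (Fin d) × M)), q ∈ S :=
    hg self_mem_nhdsWithin
  have hgK : ∀ᶠ q in (g : Filter (EuclideanSpace ℝ (Fin d) × M)),
      z q.1 q.2 ∈ Metric.closedBall (0 : EuclideanSpace ℝ (Fin d)) μ := by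
    filter_upwards [hgS] with q hq
    exact (hz q.1 hq.1 q.2).1
  have hK : IsCompact (Metric.closedBall (0 : EuclideanSpace ℝ (Fin d)) μ) :=
    isCompact_closedBall _ _
  obtain ⟨w, hwK, hw⟩ := hK.ultrafilter_le_nhds
    (Ultrafilter.map (fun q : EuclideanSpace ℝ (Fin d) × M => z q.1 q.2) g)
    (by rwa [Ultrafilter.coe_map, Filter.le_principal_iff, Filter.mem_map])
  have htz : Filter.Tendsto (fun q : EuclideanSpace ℝ (Fin d) × M => z q.1 q.2)
      (g : Filter (EuclideanSpace ℝ (Fin d) × M)) (𝓝 w) := hw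
  have htp : Filter.Tendsto (fun q : EuclideanSpace ℝ (Fin d) × M => q)
      (g : Filter (EuclideanSpace ℝ (Fin d) × M)) (𝓝 p) :=
    hg.trans nhdsWithin_le_nhds
  -- limit of Φ (z q) q.2 is Φ w p.2
  have h1 : Filter.Tendsto (fun q : EuclideanSpace ℝ (Fin d) × M => Φ (z q.1 q.2) q.2)
      (g : Filter (EuclideanSpace ℝ (Fin d) × M)) (𝓝 (Φ w p.2)) := by
    have := hΦcont.tendsto (w, p.2)
    exact this.comp (htz.prodMk_nhds ((continuous_snd.tendsto p).comp htp))
  have h2 : Filter.Tendsto (fun q : EuclideanSpace ℝ (Fin d) × M => Ψ q.1 q.2)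
      (g : Filter (EuclideanSpace ℝ (Fin d) × M)) (𝓝 (Ψ p.1 p.2)) :=
    (hΨcont.tendsto p).comp htp
  have heq : (fun q : EuclideanSpace ℝ (Fin d) × M => Φ (z q.1 q.2) q.2) =ᶠ[g]
      (fun q : EuclideanSpace ℝ (Fin d) × M => Ψ q.1 q.2) := by
    filter_upwards [hgS] with q hq
    exact ((hz q.1 hq.1 q.2).2).symm
  have hlim : Φ w p.2 = Ψ p.1 p.2 :=
    tendsto_nhds_unique (h1.congr' heq) h2
  have hzp := hz p.1 hp.1 p.2
  have hweq : w = z p.1 p.2 := by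
    apply huniq w (z p.1 p.2) (by simpa using hwK) (by simpa using hzp.1) p.2
    rw [hlim, hzp.2]
  rw [← hweq]
  exact htz
end

section
/- Let M be a compact metric space, Φ:ℝ^d×M→M a continuous ℝ^d-action with ε₀(Φ) = inf({‖v‖ : v≠0, ∃x∈M with Φ_v(x)=x} ∪ {1}) > 0, Ψ a continuous ℝ^d-action commuting with Φ, a>0, μ∈(0, ε₀(Φ)/3), and z: Ō_a×M → Ō_μ a map with Ψ_u(x) = Φ_{z(u,x)}(x) for all (u,x)∈Ō_a×M, where Ō_r = {v∈ℝ^d : ‖v‖≤r}. Then: (i) z(u+v, x) = z(u,x) + z(v, Ψ_u(x)) for all x∈M and u,v∈Ō_a with u+v∈Ō_a; and (ii) z(u, Φ_v(x)) = z(u, x) for all x∈M, u∈Ō_a, and v∈ℝ^d. -/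
/-- Cocycle-type identities for the reparametrization map `z` of
commuting `ℝ^d`-actions. -/
theorem stmt_16 {d : ℕ} {M : Type*} [MetricSpace M] [CompactSpace M]
    (Φ : EuclideanSpace ℝ (Fin d) → M → M)
    (hΦcont : Continuous fun p : EuclideanSpace ℝ (Fin d) × M => Φ p.1 p.2)
    (hΦ0 : ∀ x, Φ 0 x = x)
    (hΦadd : ∀ u v : EuclideanSpace ℝ (Fin d), ∀ x : M, Φ (u + v) x = Φ u (Φ v x))
    (ε₀ : ℝ)
    (hε₀ : ε₀ = sInf ({r : ℝ | ∃ v : EuclideanSpace ℝ (Fin d),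
      v ≠ 0 ∧ ‖v‖ = r ∧ ∃ x : M, Φ v x = x} ∪ {1}))
    (hε₀pos : 0 < ε₀)
    (Ψ : EuclideanSpace ℝ (Fin d) → M → M)
    (hΨcont : Continuous fun p : EuclideanSpace ℝ (Fin d) × M => Ψ p.1 p.2)
    (hΨ0 : ∀ x, Ψ 0 x = x)
    (hΨadd : ∀ u v : EuclideanSpace ℝ (Fin d), ∀ x : M, Ψ (u + v) x = Ψ u (Ψ v x))
    (hcomm : ∀ u v : EuclideanSpace ℝ (Fin d), ∀ x : M, Φ v (Ψ u x) = Ψ u (Φ v x))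
    (a μ : ℝ) (ha : 0 < a) (hμ : μ ∈ Set.Ioo 0 (ε₀ / 3))
    (z : EuclideanSpace ℝ (Fin d) → M → EuclideanSpace ℝ (Fin d))
    (hz : ∀ u ∈ Metric.closedBall (0 : EuclideanSpace ℝ (Fin d)) a, ∀ x : M,
      z u x ∈ Metric.closedBall (0 : EuclideanSpace ℝ (Fin d)) μ ∧ Ψ u x = Φ (z u x) x) :
    (∀ x : M, ∀ u v : EuclideanSpace ℝ (Fin d),
      u ∈ Metric.closedBall (0 : EuclideanSpace ℝ (Fin d)) a →
      v ∈ Metric.closedBall (0 : EuclideanSpace ℝ (Fin d)) a →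
      u + v ∈ Metric.closedBall (0 : EuclideanSpace ℝ (Fin d)) a →
      z (u + v) x = z u x + z v (Ψ u x)) ∧
    (∀ x : M, ∀ u ∈ Metric.closedBall (0 : EuclideanSpace ℝ (Fin d)) a,
      ∀ v : EuclideanSpace ℝ (Fin d), z u (Φ v x) = z u x) := by

  obtain ⟨hμ0, hμ3⟩ := hμ
  -- key: small periods are zero
  have key : ∀ (w : EuclideanSpace ℝ (Fin d)) (x : M), ‖w‖ < ε₀ → Φ w x = x → w = 0 := by
    intro w x hnorm hfix
    by_contra hw
    have hmem : ‖w‖ ∈ ({r : ℝ | ∃ v : EuclideanSpace ℝ (Fin d),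
        v ≠ 0 ∧ ‖v‖ = r ∧ ∃ x : M, Φ v x = x} ∪ {1}) :=
      Or.inl ⟨w, hw, rfl, x, hfix⟩
    have hbdd : BddBelow ({r : ℝ | ∃ v : EuclideanSpace ℝ (Fin d),
        v ≠ 0 ∧ ‖v‖ = r ∧ ∃ x : M, Φ v x = x} ∪ {1}) := by
      refine ⟨0, ?_⟩
      rintro r (⟨v, _, hv, _⟩ | hr)
      · rw [← hv]; exact norm_nonneg v
      · simp at hr; linarith [hr]
    have := csInf_le hbdd hmem
    rw [← hε₀] at this
    linarith
  -- cancellation: if Φ a x = Φ b x then Φ (a - b) x = x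
  have cancel : ∀ (p q : EuclideanSpace ℝ (Fin d)) (x : M),
      Φ p x = Φ q x → Φ (p - q) x = x := by
    intro p q x h
    have : Φ (-q + p) x = Φ (-q) (Φ q x) := by rw [hΦadd, h]
    rw [← hΦadd] at this
    rw [neg_add_cancel, hΦ0] at this
    simpa [sub_eq_neg_add] using this
  have hzn : ∀ u ∈ Metric.closedBall (0 : EuclideanSpace ℝ (Fin d)) a, ∀ x : M,
      ‖z u x‖ ≤ μ := by
    intro u hu x
    have := (hz u hu x).1
    simpa [Metric.mem_closedBall, dist_eq_norm] using this
  constructor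
  · intro x u v hu hv huv
    have h1 : Ψ (u + v) x = Φ (z (u + v) x) x := (hz _ huv x).2
    have h2 : Ψ u x = Φ (z u x) x := (hz u hu x).2
    have h3 : Ψ v (Ψ u x) = Φ (z v (Ψ u x)) (Ψ u x) := (hz v hv (Ψ u x)).2
    have h4 : Ψ (u + v) x = Φ (z u x + z v (Ψ u x)) x := by
      rw [add_comm u v, hΨadd, h3, h2, ← hΦadd, add_comm]
    have hfix : Φ (z (u + v) x - (z u x + z v (Ψ u x))) x = x :=
      cancel _ _ _ (h1.symm.trans h4)
    have hsmall : ‖z (u + v) x - (z u x + z v (Ψ u x))‖ < ε₀ := by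
      calc ‖z (u + v) x - (z u x + z v (Ψ u x))‖
          ≤ ‖z (u + v) x‖ + ‖z u x + z v (Ψ u x)‖ := norm_sub_le _ _
        _ ≤ ‖z (u + v) x‖ + (‖z u x‖ + ‖z v (Ψ u x)‖) := by
            linarith [norm_add_le (z u x) (z v (Ψ u x))]
        _ ≤ μ + (μ + μ) := by
            linarith [hzn _ huv x, hzn u hu x, hzn v hv (Ψ u x)]
        _ < ε₀ := by linarith
    have := key _ _ hsmall hfix
    rwa [sub_eq_zero] at this
  · intro x u hu v
    have h1 : Ψ u (Φ v x) = Φ (z u (Φ v x)) (Φ v x) := (hz u hu (Φ v x)).2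
    have h2 : Ψ u x = Φ (z u x) x := (hz u hu x).2
    have h4 : Ψ u (Φ v x) = Φ (z u x) (Φ v x) := by
      rw [← hcomm, h2, ← hΦadd, ← hΦadd, add_comm]
    have hfix : Φ (z u (Φ v x) - z u x) (Φ v x) = Φ v x :=
      cancel _ _ _ (h1.symm.trans h4)
    have hsmall : ‖z u (Φ v x) - z u x‖ < ε₀ := by
      calc ‖z u (Φ v x) - z u x‖ ≤ ‖z u (Φ v x)‖ + ‖z u x‖ := norm_sub_le _ _
        _ ≤ μ + μ := by linarith [hzn u hu (Φ v x), hzn u hu x]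
        _ < ε₀ := by linarith
    have := key _ _ hsmall hfix
    rwa [sub_eq_zero] at this
end

section
/- Let M be a compact metric space, Φ:ℝ^d×M→M a continuous ℝ^d-action with ε₀(Φ) = inf({‖v‖ : v≠0, ∃x∈M with Φ_v(x)=x} ∪ {1}) > 0, Ψ a continuous ℝ^d-action commuting with Φ, a>0, μ∈(0, ε₀(Φ)/3), and z: Ō_a×M → Ō_μ a continuous map with Ψ_u(x) = Φ_{z(u,x)}(x) for all (u,x)∈Ō_a×M, where Ō_r = {v∈ℝ^d : ‖v‖≤r}. Then there exists a continuous map A: M → M_{d×d}(ℝ) into the space of d×d real matrices such that z(u, x) = A(x)u for all x∈M and u∈Ō_a. -/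
/-!
The fixed-point-free radius `ε₀` makes `v ↦ Φ v x` injective on vectors of norm `< ε₀`.
Since `Ψ` commutes with `Φ` and `z` takes values of norm `≤ μ < ε₀ / 3`, this forces
`z u` to be constant along `Φ`-orbits and hence `z (u + v) x = z u x + z v x` on `Ō_a`.
A continuous map that is additive on a ball is the restriction of a linear map, and the
matrix of that map has columns `a⁻¹ • z (a • eⱼ) x`, which depend continuously on `x`.
-/

open Metric Set Filter

def IsAdditiveOn {E F : Type*} [Add E] [Add F] (f : E → F) (s : Set E) : Prop :=
  ∀ u ∈ s, ∀ v ∈ s, u + v ∈ s → f (u + v) = f u + f v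

section LocallyAdditive

variable {E F : Type*} [NormedAddCommGroup E] [NormedSpace ℝ E] [AddCommGroup F]
  {f : E → F} {r : ℝ}

theorem map_nsmul_of_add_on_closedBall
    (hadd : IsAdditiveOn f (closedBall 0 r))
    (n : ℕ) {w : E} (hw : n • w ∈ closedBall (0 : E) r) : f (n • w) = n • f w := by
  induction n with
  | zero =>
    have h0 : (0 : E) ∈ closedBall 0 r := by simpa using hw
    simpa using hadd 0 h0 0 h0 (by simpa using h0)
  | succ n ih =>
    have hle : ∀ k ≤ n + 1, k • w ∈ closedBall (0 : E) r := fun k hk => by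
      rw [mem_closedBall_zero_iff, RCLike.norm_nsmul ℝ] at hw ⊢
      exact (nsmul_le_nsmul_left (norm_nonneg w) hk).trans hw
    rw [succ_nsmul, succ_nsmul, hadd _ (hle n n.le_succ) _ (by simpa using hle 1 (by omega))
      (succ_nsmul w n ▸ hw), ih (hle n n.le_succ)]

theorem nsmul_map_inv_smul_of_add_on_closedBall
    (hadd : IsAdditiveOn f (closedBall 0 r))
    {n : ℕ} (hn : n ≠ 0) {v : E} (hv : v ∈ closedBall (0 : E) r) :
    n • f ((n : ℝ)⁻¹ • v) = f v := by
  have hv' : n • ((n : ℝ)⁻¹ • v) = v := by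
    rw [← Nat.cast_smul_eq_nsmul ℝ, smul_inv_smul₀ (by exact_mod_cast hn)]
  rw [← map_nsmul_of_add_on_closedBall hadd n (hv'.symm ▸ hv), hv']

theorem inv_natCast_smul_mem_closedBall {n : ℕ} (hn : n ≠ 0) {v : E} (hv : ‖v‖ ≤ n * r) :
    (n : ℝ)⁻¹ • v ∈ closedBall (0 : E) r := by
  rw [mem_closedBall_zero_iff, norm_smul, norm_inv, Real.norm_natCast,
    inv_mul_le_iff₀ (by positivity)]
  exact hv

theorem nsmul_map_inv_smul_eq_of_add_on_closedBall
    (hadd : IsAdditiveOn f (closedBall 0 r))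
    {m n : ℕ} (hm : m ≠ 0) (hn : n ≠ 0) {v : E} (hvm : ‖v‖ ≤ m * r) (hvn : ‖v‖ ≤ n * r) :
    m • f ((m : ℝ)⁻¹ • v) = n • f ((n : ℝ)⁻¹ • v) := by
  rw [← nsmul_map_inv_smul_of_add_on_closedBall hadd hn (inv_natCast_smul_mem_closedBall hm hvm),
    ← nsmul_map_inv_smul_of_add_on_closedBall hadd hm (inv_natCast_smul_mem_closedBall hn hvn),
    smul_comm ((n : ℝ)⁻¹), smul_comm m]

/-- Rescaling by `n • f (n⁻¹ • v)` for large `n` extends `f` additively, and continuous additive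
maps are `ℝ`-linear. -/
theorem exists_continuousLinearMap_eqOn_closedBall [Module ℝ F] [TopologicalSpace F]
    [IsTopologicalAddGroup F] [ContinuousSMul ℝ F] [T2Space F] (hr : 0 < r)
    (hf : ContinuousOn f (closedBall 0 r))
    (hadd : IsAdditiveOn f (closedBall 0 r)) :
    ∃ L : E →L[ℝ] F, EqOn f L (closedBall 0 r) := by
  have hlarge : ∀ v : E, ∃ n : ℕ, n ≠ 0 ∧ ‖v‖ ≤ n * r := fun v => by
    obtain ⟨n, hn⟩ := exists_nat_gt (‖v‖ / r)
    refine ⟨n, ?_, ((div_lt_iff₀ hr).1 hn).le⟩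
    rintro rfl
    exact (div_nonneg (norm_nonneg v) hr.le).not_gt (by simpa using hn)
  choose N hN0 hN using hlarge
  have hg : ∀ {n : ℕ} {v : E}, n ≠ 0 → ‖v‖ ≤ n * r →
      N v • f ((N v : ℝ)⁻¹ • v) = n • f ((n : ℝ)⁻¹ • v) := fun hn hv =>
    nsmul_map_inv_smul_eq_of_add_on_closedBall hadd (hN0 _) hn (hN _) hv
  let g : E →+ F := AddMonoidHom.mk' (fun v => N v • f ((N v : ℝ)⁻¹ • v)) fun u v => by
    have hn : N u + N v ≠ 0 := by have := hN0 u; omega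
    have hu : ‖u‖ ≤ ↑(N u + N v) * r := by push_cast; nlinarith [hN u, hN v, norm_nonneg v]
    have hv : ‖v‖ ≤ ↑(N u + N v) * r := by push_cast; nlinarith [hN u, hN v, norm_nonneg u]
    have huv : ‖u + v‖ ≤ ↑(N u + N v) * r := by
      push_cast; linarith [norm_add_le u v, hN u, hN v]
    change N (u + v) • f _ = N u • f _ + N v • f _
    rw [hg hn huv, hg hn hu, hg hn hv, ← nsmul_add, smul_add,
      hadd _ (inv_natCast_smul_mem_closedBall hn hu) _ (inv_natCast_smul_mem_closedBall hn hv)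
        (by rw [← smul_add]; exact inv_natCast_smul_mem_closedBall hn huv)]
  have hgf : EqOn f g (closedBall 0 r) := fun v hv => by
    change f v = N v • f ((N v : ℝ)⁻¹ • v)
    rw [hg one_ne_zero (by simpa using hv)]
    simp
  have hg0 : ContinuousAt g 0 :=
    (hf.continuousAt (closedBall_mem_nhds 0 hr)).congr
      (eventually_of_mem (closedBall_mem_nhds 0 hr) hgf)
  exact ⟨g.toRealLinearMap (continuous_of_continuousAt_zero g hg0), hgf⟩

end LocallyAdditive

theorem Matrix.toEuclideanLin_symm_apply {m n : Type*} [Fintype m] [Fintype n] [DecidableEq n]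
    (f : EuclideanSpace ℝ n →ₗ[ℝ] EuclideanSpace ℝ m) (i : m) (j : n) :
    Matrix.toEuclideanLin.symm f i j = f (EuclideanSpace.single j 1) i := by
  rw [Matrix.toEuclideanLin_eq_toLin_orthonormal, Matrix.toLin_symm, LinearMap.toMatrix_apply]
  simp

section Reparametrization

variable {E M : Type*} [NormedAddCommGroup E] {Φ Ψ : E → M → M} {ε μ : ℝ}

theorem eq_of_apply_eq_of_norm_sub_lt (hΦ0 : ∀ x, Φ 0 x = x)
    (hΦadd : ∀ u v x, Φ (u + v) x = Φ u (Φ v x))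
    (hfree : ∀ v x, Φ v x = x → ‖v‖ < ε → v = 0) {u v : E} {x : M}
    (h : Φ u x = Φ v x) (huv : ‖u - v‖ < ε) : u = v := by
  refine sub_eq_zero.1 (hfree _ x ?_ huv)
  rw [sub_eq_neg_add, hΦadd, h, ← hΦadd, neg_add_cancel, hΦ0]

theorem reparam_apply_act (hΦ0 : ∀ x, Φ 0 x = x)
    (hΦadd : ∀ u v x, Φ (u + v) x = Φ u (Φ v x))
    (hfree : ∀ v x, Φ v x = x → ‖v‖ < ε → v = 0)
    (hcomm : ∀ u v x, Φ v (Ψ u x) = Ψ u (Φ v x)) {U : Set E} {z : E → M → E}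
    (hz : ∀ u ∈ U, ∀ x, z u x ∈ closedBall 0 μ ∧ Ψ u x = Φ (z u x) x) (hμ : 2 * μ < ε)
    {u : E} (hu : u ∈ U) (w : E) (x : M) : z u (Φ w x) = z u x := by
  refine eq_of_apply_eq_of_norm_sub_lt hΦ0 hΦadd hfree (x := Φ w x) ?_ ?_
  · rw [← (hz u hu _).2, ← hcomm, (hz u hu x).2, ← hΦadd, ← hΦadd, add_comm]
  · have h₁ := mem_closedBall_zero_iff.1 (hz u hu (Φ w x)).1
    have h₂ := mem_closedBall_zero_iff.1 (hz u hu x).1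
    linarith [norm_sub_le (z u (Φ w x)) (z u x)]

theorem reparam_isAdditiveOn (hΦ0 : ∀ x, Φ 0 x = x)
    (hΦadd : ∀ u v x, Φ (u + v) x = Φ u (Φ v x))
    (hfree : ∀ v x, Φ v x = x → ‖v‖ < ε → v = 0)
    (hΨadd : ∀ u v x, Ψ (u + v) x = Ψ u (Ψ v x))
    (hcomm : ∀ u v x, Φ v (Ψ u x) = Ψ u (Φ v x)) {U : Set E} {z : E → M → E}
    (hz : ∀ u ∈ U, ∀ x, z u x ∈ closedBall 0 μ ∧ Ψ u x = Φ (z u x) x) (hμ : 3 * μ < ε)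
    (x : M) : IsAdditiveOn (z · x) U := by
  intro u hu v hv huv
  have h₁ := mem_closedBall_zero_iff.1 (hz _ huv x).1
  have h₂ := mem_closedBall_zero_iff.1 (hz u hu x).1
  have h₃ := mem_closedBall_zero_iff.1 (hz v hv x).1
  have hμ0 : 0 ≤ μ := (norm_nonneg _).trans h₂
  refine eq_of_apply_eq_of_norm_sub_lt hΦ0 hΦadd hfree (x := x) ?_ ?_
  · rw [← (hz _ huv x).2, hΨadd, (hz v hv x).2, (hz u hu _).2,
      reparam_apply_act hΦ0 hΦadd hfree hcomm hz (by linarith) hu, ← hΦadd]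
  · linarith [norm_sub_le (z (u + v) x) (z u x + z v x), norm_add_le (z u x) (z v x)]

end Reparametrization

theorem stmt_17_general {d : ℕ} {M : Type*} [MetricSpace M]
    (Φ : EuclideanSpace ℝ (Fin d) → M → M)
    (hΦ0 : ∀ x, Φ 0 x = x)
    (hΦadd : ∀ u v : EuclideanSpace ℝ (Fin d), ∀ x : M, Φ (u + v) x = Φ u (Φ v x))
    (ε₀ : ℝ)
    (hε₀ : ε₀ = sInf ({r : ℝ | ∃ v : EuclideanSpace ℝ (Fin d),
      v ≠ 0 ∧ ‖v‖ = r ∧ ∃ x : M, Φ v x = x} ∪ {1}))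
    (Ψ : EuclideanSpace ℝ (Fin d) → M → M)
    (hΨadd : ∀ u v : EuclideanSpace ℝ (Fin d), ∀ x : M, Ψ (u + v) x = Ψ u (Ψ v x))
    (hcomm : ∀ u v : EuclideanSpace ℝ (Fin d), ∀ x : M, Φ v (Ψ u x) = Ψ u (Φ v x))
    (a μ : ℝ) (ha : 0 < a) (hμ : μ ∈ Set.Ioo 0 (ε₀ / 3))
    (z : EuclideanSpace ℝ (Fin d) → M → EuclideanSpace ℝ (Fin d))
    (hzcont : ContinuousOn (fun p : EuclideanSpace ℝ (Fin d) × M => z p.1 p.2)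
      (Metric.closedBall (0 : EuclideanSpace ℝ (Fin d)) a ×ˢ Set.univ))
    (hz : ∀ u ∈ Metric.closedBall (0 : EuclideanSpace ℝ (Fin d)) a, ∀ x : M,
      z u x ∈ Metric.closedBall (0 : EuclideanSpace ℝ (Fin d)) μ ∧ Ψ u x = Φ (z u x) x) :
    ∃ A : M → Matrix (Fin d) (Fin d) ℝ, Continuous A ∧
      ∀ x : M, ∀ u ∈ Metric.closedBall (0 : EuclideanSpace ℝ (Fin d)) a,
        z u x = Matrix.toEuclideanLin (A x) u := by
  have hfree : ∀ v x, Φ v x = x → ‖v‖ < ε₀ → v = 0 := fun v x hx hv => by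
    by_contra hv0
    refine hv.not_ge (hε₀ ▸ csInf_le ⟨0, ?_⟩ (Or.inl ⟨v, hv0, rfl, x, hx⟩))
    rintro _ (⟨w, -, rfl, -⟩ | rfl) <;> positivity
  have hlin : ∀ x, ∃ L : EuclideanSpace ℝ (Fin d) →L[ℝ] EuclideanSpace ℝ (Fin d),
      EqOn (z · x) L (closedBall 0 a) := fun x =>
    exists_continuousLinearMap_eqOn_closedBall ha
      (hzcont.comp (continuous_id.prodMk continuous_const).continuousOn fun u hu => ⟨hu, trivial⟩)
      (reparam_isAdditiveOn hΦ0 hΦadd hfree hΨadd hcomm hz (by linarith [hμ.2]) x)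
  choose L hL using hlin
  refine ⟨fun x => Matrix.toEuclideanLin.symm (L x), ?_, fun x u hu => by simpa using hL x hu⟩
  have hmem : ∀ j : Fin d, a • EuclideanSpace.single j (1 : ℝ) ∈ closedBall 0 a := fun j => by
    rw [mem_closedBall_zero_iff, norm_smul, PiLp.norm_single, norm_one, mul_one,
      Real.norm_of_nonneg ha.le]
  have hcol : ∀ j x, L x (EuclideanSpace.single j 1) =
      a⁻¹ • z (a • EuclideanSpace.single j 1) x := fun j x => by
    rw [show z _ x = L x _ from hL x (hmem j), map_smul, inv_smul_smul₀ ha.ne']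
  refine continuous_matrix fun i j => ?_
  simp only [Matrix.toEuclideanLin_symm_apply, ContinuousLinearMap.coe_coe, hcol]
  have hzj : Continuous (z (a • EuclideanSpace.single j 1)) :=
    hzcont.comp_continuous (continuous_const.prodMk continuous_id) fun _ => ⟨hmem j, trivial⟩
  exact (EuclideanSpace.proj i).continuous.comp (hzj.const_smul a⁻¹)

/-- The reparametrization map is linear: there is a continuous
matrix-valued map `A` with `z(u,x) = A(x)u` on `Ō_a`. -/
theorem stmt_17 {d : ℕ} {M : Type*} [MetricSpace M] [CompactSpace M]
    (Φ : EuclideanSpace ℝ (Fin d) → M → M)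
    (hΦcont : Continuous fun p : EuclideanSpace ℝ (Fin d) × M => Φ p.1 p.2)
    (hΦ0 : ∀ x, Φ 0 x = x)
    (hΦadd : ∀ u v : EuclideanSpace ℝ (Fin d), ∀ x : M, Φ (u + v) x = Φ u (Φ v x))
    (ε₀ : ℝ)
    (hε₀ : ε₀ = sInf ({r : ℝ | ∃ v : EuclideanSpace ℝ (Fin d),
      v ≠ 0 ∧ ‖v‖ = r ∧ ∃ x : M, Φ v x = x} ∪ {1}))
    (hε₀pos : 0 < ε₀)
    (Ψ : EuclideanSpace ℝ (Fin d) → M → M)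
    (hΨcont : Continuous fun p : EuclideanSpace ℝ (Fin d) × M => Ψ p.1 p.2)
    (hΨ0 : ∀ x, Ψ 0 x = x)
    (hΨadd : ∀ u v : EuclideanSpace ℝ (Fin d), ∀ x : M, Ψ (u + v) x = Ψ u (Ψ v x))
    (hcomm : ∀ u v : EuclideanSpace ℝ (Fin d), ∀ x : M, Φ v (Ψ u x) = Ψ u (Φ v x))
    (a μ : ℝ) (ha : 0 < a) (hμ : μ ∈ Set.Ioo 0 (ε₀ / 3))
    (z : EuclideanSpace ℝ (Fin d) → M → EuclideanSpace ℝ (Fin d))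
    (hzcont : ContinuousOn (fun p : EuclideanSpace ℝ (Fin d) × M => z p.1 p.2)
      (Metric.closedBall (0 : EuclideanSpace ℝ (Fin d)) a ×ˢ Set.univ))
    (hz : ∀ u ∈ Metric.closedBall (0 : EuclideanSpace ℝ (Fin d)) a, ∀ x : M,
      z u x ∈ Metric.closedBall (0 : EuclideanSpace ℝ (Fin d)) μ ∧ Ψ u x = Φ (z u x) x) :
    ∃ A : M → Matrix (Fin d) (Fin d) ℝ, Continuous A ∧
      ∀ x : M, ∀ u ∈ Metric.closedBall (0 : EuclideanSpace ℝ (Fin d)) a,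
        z u x = Matrix.toEuclideanLin (A x) u :=
  stmt_17_general Φ hΦ0 hΦadd ε₀ hε₀ Ψ hΨadd hcomm a μ ha hμ z hzcont hz
end

section
/- Let M be a compact metric space, Φ and Ψ continuous ℝ^d-actions on M with Φ_v∘Ψ_u = Ψ_u∘Φ_v for all u,v∈ℝ^d, and let A: M → M_{d×d}(ℝ) be a map satisfying A(Φ_v(x)) = A(x) for all x∈M and v∈ℝ^d. If there exists a>0 such that Ψ_u(x) = Φ_{A(x)u}(x) for every x∈M and every u∈ℝ^d with ‖u‖ ≤ a, then Ψ_u(x) = Φ_{A(x)u}(x) for every x∈M and every u∈ℝ^d. -/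
/-- If `Ψ_u(x) = Φ_{A(x)u}(x)` holds for all `u` with `‖u‖ ≤ a` and `A`
is invariant along `Φ`-orbits, then it holds for all `u ∈ ℝ^d`. -/
theorem stmt_18 {d : ℕ} {M : Type*} [MetricSpace M] [CompactSpace M]
    (Φ : EuclideanSpace ℝ (Fin d) → M → M)
    (hΦcont : Continuous fun p : EuclideanSpace ℝ (Fin d) × M => Φ p.1 p.2)
    (hΦ0 : ∀ x, Φ 0 x = x)
    (hΦadd : ∀ u v : EuclideanSpace ℝ (Fin d), ∀ x : M, Φ (u + v) x = Φ u (Φ v x))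
    (Ψ : EuclideanSpace ℝ (Fin d) → M → M)
    (hΨcont : Continuous fun p : EuclideanSpace ℝ (Fin d) × M => Ψ p.1 p.2)
    (hΨ0 : ∀ x, Ψ 0 x = x)
    (hΨadd : ∀ u v : EuclideanSpace ℝ (Fin d), ∀ x : M, Ψ (u + v) x = Ψ u (Ψ v x))
    (hcomm : ∀ u v : EuclideanSpace ℝ (Fin d), ∀ x : M, Φ v (Ψ u x) = Ψ u (Φ v x))
    (A : M → Matrix (Fin d) (Fin d) ℝ)
    (hA : ∀ x : M, ∀ v : EuclideanSpace ℝ (Fin d), A (Φ v x) = A x)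
    (a : ℝ) (ha : 0 < a)
    (hloc : ∀ x : M, ∀ u : EuclideanSpace ℝ (Fin d), ‖u‖ ≤ a →
      Ψ u x = Φ (Matrix.toEuclideanLin (A x) u) x) :
    ∀ x : M, ∀ u : EuclideanSpace ℝ (Fin d),
      Ψ u x = Φ (Matrix.toEuclideanLin (A x) u) x := by
  have key : ∀ n : ℕ, ∀ x : M, ∀ w : EuclideanSpace ℝ (Fin d), ‖w‖ ≤ a →
      Ψ ((n : ℝ) • w) x = Φ (Matrix.toEuclideanLin (A x) ((n : ℝ) • w)) x := by
    intro n
    induction n with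
    | zero =>
      intro x w _
      simp [hΨ0, hΦ0]
    | succ n ih =>
      intro x w hw
      have : ((n + 1 : ℕ) : ℝ) • w = w + (n : ℝ) • w := by
        push_cast
        rw [add_smul, one_smul, add_comm]
      rw [this, hΨadd, ih x w hw, ← hcomm, hloc x w hw, ← hΦadd, map_add, add_comm]
  intro x u
  set n : ℕ := ⌈‖u‖ / a⌉₊ + 1 with hn
  have hnpos : (0 : ℝ) < (n : ℝ) := by positivity
  have hw : ‖((n : ℝ)⁻¹) • u‖ ≤ a := by
    rw [norm_smul, norm_inv, Real.norm_natCast]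
    rw [inv_mul_le_iff₀ hnpos]
    calc ‖u‖ ≤ (⌈‖u‖ / a⌉₊ : ℝ) * a := by
          rw [← div_le_iff₀ ha]; exact Nat.le_ceil _
      _ ≤ (n : ℝ) * a := by
          apply mul_le_mul_of_nonneg_right _ ha.le
          exact_mod_cast Nat.le_succ _
  have := key n x (((n : ℝ)⁻¹) • u) hw
  rwa [smul_smul, mul_inv_cancel₀ hnpos.ne', one_smul] at this
end
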